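/- arXiv:2411.06192 — 4 statements merged into one kernel-verified Lean document; each statement's English description precedes it below -/
import Mathlib

section
/- (Change of measure / Donsker–Varadhan.) Let π be a probability measure on a measurable space (X, 𝒯) and let h : X → ℝ be measurable with ∫ e^{h} dπ < +∞. Then log ∫ e^{h(x)} dπ(x) = sup over probability measures ρ on (X, 𝒯) such that KL(ρ, π) < ∞ and h is ρ-integrable of ( ∫ h dρ − KL(ρ, π) ). -/
open MeasureTheory

/- The Kullback–Leibler divergence `KL(ρ, π) = ∫ log (dρ/dπ) dρ` when `ρ ≪ π` (and the
integral is well defined), and `+∞` otherwise. -/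
open Classical in
noncomputable def KL {X : Type*} [MeasurableSpace X] (ρ π : Measure X) : EReal :=
  if ρ ≪ π ∧ Integrable (fun x => Real.log (ρ.rnDeriv π x).toReal) ρ
  then ((∫ x, Real.log (ρ.rnDeriv π x).toReal ∂ρ : ℝ) : EReal)
  else ⊤

section gibbs
variable {X : Type*} [MeasurableSpace X]

/-- Gibbs' inequality. -/
lemma gibbs_aux (π ρ : Measure X) [IsProbabilityMeasure π] [IsProbabilityMeasure ρ]
    (hρπ : ρ ≪ π) {h : X → ℝ} (hmeas : Measurable h)
    (hint : Integrable (fun x => Real.exp (h x)) π)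
    (hh : Integrable h ρ) (hllr : Integrable (llr ρ π) ρ) :
    ∫ x, h x ∂ρ - ∫ x, llr ρ π x ∂ρ ≤ Real.log (∫ x, Real.exp (h x) ∂π) := by
  set Z := ∫ x, Real.exp (h x) ∂π with hZdef
  have hZpos : 0 < Z := integral_exp_pos hint
  set f : X → ℝ := fun x => h x - llr ρ π x with hfdef
  have hf_int : Integrable f ρ := hh.sub hllr
  have hmeas_f : Measurable f := hmeas.sub (measurable_llr _ _)
  have h_ae : (fun x => ENNReal.ofReal (Real.exp (f x)))
      =ᵐ[ρ] fun x => ENNReal.ofReal (Real.exp (h x)) * (ρ.rnDeriv π x)⁻¹ := by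
    filter_upwards [exp_llr_of_ac ρ π hρπ, Measure.rnDeriv_pos hρπ,
      hρπ.ae_le (Measure.rnDeriv_lt_top ρ π)] with x hx hpos hlt
    have hne : ρ.rnDeriv π x ≠ 0 := hpos.ne'
    have heq : Real.exp (f x) = Real.exp (h x) * ((ρ.rnDeriv π x).toReal)⁻¹ := by
      rw [hfdef]
      simp only [Real.exp_sub, ← hx, div_eq_mul_inv]
    rw [heq, ENNReal.ofReal_mul (Real.exp_pos _).le, ← ENNReal.toReal_inv,
      ENNReal.ofReal_toReal (by simp [hne])]
  have h_lint : ∫⁻ x, ENNReal.ofReal (Real.exp (f x)) ∂ρ ≤ ENNReal.ofReal Z := by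
    rw [lintegral_congr_ae h_ae]
    have hg : AEMeasurable (fun x => ENNReal.ofReal (Real.exp (h x)) * (ρ.rnDeriv π x)⁻¹) π :=
      ((Real.measurable_exp.comp hmeas).ennreal_ofReal.mul
        (Measure.measurable_rnDeriv ρ π).inv).aemeasurable
    rw [← MeasureTheory.lintegral_rnDeriv_mul hρπ hg]
    calc ∫⁻ x, ρ.rnDeriv π x * (ENNReal.ofReal (Real.exp (h x)) * (ρ.rnDeriv π x)⁻¹) ∂π
        ≤ ∫⁻ x, ENNReal.ofReal (Real.exp (h x)) ∂π := by
          refine lintegral_mono fun x => ?_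
          rcases eq_or_ne (ρ.rnDeriv π x) 0 with h0 | h0
          · simp [h0]
          rcases eq_or_ne (ρ.rnDeriv π x) ⊤ with hT | hT
          · simp [hT]
          · rw [mul_comm (ENNReal.ofReal _), ← mul_assoc, ENNReal.mul_inv_cancel h0 hT, one_mul]
      _ = ENNReal.ofReal Z :=
          (ofReal_integral_eq_lintegral_ofReal hint (ae_of_all _ fun x => (Real.exp_pos _).le)).symm
  have hexp_int : Integrable (fun x => Real.exp (f x)) ρ := by
    refine ⟨(Real.measurable_exp.comp hmeas_f).aestronglyMeasurable, ?_⟩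
    rw [hasFiniteIntegral_iff_ofReal (ae_of_all _ fun x => (Real.exp_pos _).le)]
    exact lt_of_le_of_lt h_lint ENNReal.ofReal_lt_top
  have h_int_exp_le : ∫ x, Real.exp (f x) ∂ρ ≤ Z := by
    rw [integral_eq_lintegral_of_nonneg_ae (ae_of_all _ fun x => (Real.exp_pos _).le)
      (Real.measurable_exp.comp hmeas_f).aestronglyMeasurable]
    calc (∫⁻ x, ENNReal.ofReal (Real.exp (f x)) ∂ρ).toReal
        ≤ (ENNReal.ofReal Z).toReal := ENNReal.toReal_mono ENNReal.ofReal_ne_top h_lint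
      _ = Z := ENNReal.toReal_ofReal hZpos.le
  have key : ∀ x, f x + 1 ≤ Real.exp (f x) / Z + Real.log Z := fun x => by
    have h1 := Real.add_one_le_exp (f x - Real.log Z)
    rw [Real.exp_sub, Real.exp_log hZpos] at h1
    linarith
  have hint1 : Integrable (fun x => f x + 1) ρ := hf_int.add (integrable_const _)
  have hint2 : Integrable (fun x => Real.exp (f x) / Z + Real.log Z) ρ :=
    (hexp_int.div_const _).add (integrable_const _)
  have hmono := integral_mono hint1 hint2 key
  rw [integral_add hf_int (integrable_const _),
    integral_add (hexp_int.div_const _) (integrable_const _), integral_div,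
    integral_const, integral_const] at hmono
  simp only [measure_univ, probReal_univ, ENNReal.toReal_one, smul_eq_mul, one_mul] at hmono
  have hdiv : (∫ x, Real.exp (f x) ∂ρ) / Z ≤ 1 := by
    rw [div_le_one hZpos]; exact h_int_exp_le
  have hfeq : ∫ x, f x ∂ρ = ∫ x, h x ∂ρ - ∫ x, llr ρ π x ∂ρ := integral_sub hh hllr
  linarith

end gibbs

section dv_aux
variable {X : Type*} [MeasurableSpace X]

/-- Pointwise bound used for integrability w.r.t. the tilted measure. -/
lemma dv_bound (a : ℝ) (n : ℕ) :
    |a| * Real.exp (min a n) ≤ ((n : ℝ) + 1) * Real.exp n + Real.exp n * Real.exp a := by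
  rcases le_or_gt a (n : ℝ) with hc | hc
  · rw [min_eq_left hc]
    rcases le_or_gt 0 a with hp | hp
    · rw [abs_of_nonneg hp]
      have h2 : Real.exp a ≤ Real.exp n := Real.exp_le_exp.mpr hc
      have h5 : a * Real.exp a ≤ (n : ℝ) * Real.exp n :=
        mul_le_mul hc h2 (Real.exp_pos _).le (Nat.cast_nonneg n)
      nlinarith [Real.exp_pos (n : ℝ), mul_pos (Real.exp_pos (n : ℝ)) (Real.exp_pos a)]
    · rw [abs_of_neg hp]
      have h1 : -a ≤ Real.exp (-a) := by linarith [Real.add_one_le_exp (-a)]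
      have h2 : -a * Real.exp a ≤ 1 := by
        have := mul_le_mul_of_nonneg_right h1 (Real.exp_pos a).le
        rwa [← Real.exp_add, neg_add_cancel, Real.exp_zero] at this
      have h4 : (1 : ℝ) ≤ ((n : ℝ) + 1) * Real.exp n := by
        have h5 : (1 : ℝ) ≤ Real.exp n := Real.one_le_exp (Nat.cast_nonneg n)
        nlinarith [Nat.cast_nonneg (α := ℝ) n]
      nlinarith [mul_pos (Real.exp_pos (n : ℝ)) (Real.exp_pos a)]
  · rw [min_eq_right hc.le, abs_of_pos (lt_of_le_of_lt (Nat.cast_nonneg n) hc)]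
    have h1 : a ≤ Real.exp a := by linarith [Real.add_one_le_exp a]
    have h2 : a * Real.exp (n : ℝ) ≤ Real.exp a * Real.exp (n : ℝ) :=
      mul_le_mul_of_nonneg_right h1 (Real.exp_pos _).le
    nlinarith [Real.exp_pos (n : ℝ), mul_pos (Real.exp_pos (n : ℝ)) (Real.exp_pos a)]

end dv_aux

/-- **Change of measure / Donsker–Varadhan.** For a probability measure `π` and a measurable
`h : X → ℝ` with `∫ e^h dπ < ∞`,
`log ∫ e^h dπ = sup { ∫ h dρ − KL(ρ, π) : ρ probability, KL(ρ,π) < ∞, h ρ-integrable }`. -/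
theorem donsker_varadhan {X : Type*} [MeasurableSpace X] (π : Measure X)
    [IsProbabilityMeasure π] (h : X → ℝ) (hmeas : Measurable h)
    (hint : Integrable (fun x => Real.exp (h x)) π) :
    (Real.log (∫ x, Real.exp (h x) ∂π) : EReal) =
      ⨆ ρ : {ρ : Measure X // IsProbabilityMeasure ρ ∧ KL ρ π < ⊤ ∧ Integrable h ρ},
        (((∫ x, h x ∂ρ.1 : ℝ) : EReal) - KL ρ.1 π) := by
  have hZpos : 0 < ∫ x, Real.exp (h x) ∂π := integral_exp_pos hint
  apply le_antisymm
  · -- lower bound via tilted truncated measures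
    have key : ∀ n : ℕ, ((Real.log (∫ x, Real.exp (min (h x) n) ∂π)) : EReal) ≤
        ⨆ ρ : {ρ : Measure X // IsProbabilityMeasure ρ ∧ KL ρ π < ⊤ ∧ Integrable h ρ},
          (((∫ x, h x ∂ρ.1 : ℝ) : EReal) - KL ρ.1 π) := by
      intro n
      set g : X → ℝ := fun x => min (h x) n with hgdef
      have hgmeas : Measurable g := hmeas.min measurable_const
      have hgexp_int : Integrable (fun x => Real.exp (g x)) π := by
        refine hint.mono (Real.measurable_exp.comp hgmeas).aestronglyMeasurable
          (ae_of_all _ fun x => ?_)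
        rw [Real.norm_eq_abs, Real.norm_eq_abs, abs_of_pos (Real.exp_pos _),
          abs_of_pos (Real.exp_pos _)]
        exact Real.exp_le_exp.mpr (min_le_left _ _)
      set Zn := ∫ x, Real.exp (g x) ∂π with hZn
      have hZnpos : 0 < Zn := integral_exp_pos hgexp_int
      set ρn := π.tilted g with hρn
      haveI hρn_prob : IsProbabilityMeasure ρn := isProbabilityMeasure_tilted hgexp_int
      have habs : ρn ≪ π := tilted_absolutelyContinuous π g
      -- integrability of h w.r.t. ρn
      have hint_hg : Integrable (fun x => h x * (Real.exp (g x) / Zn)) π := by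
        refine Integrable.mono
          (((integrable_const (((n : ℝ) + 1) * Real.exp n)).add
            (hint.const_mul (Real.exp n))).div_const Zn)
          ((hmeas.mul ((Real.measurable_exp.comp hgmeas).div_const Zn)).aestronglyMeasurable)
          (ae_of_all _ fun x => ?_)
        have hb := dv_bound (h x) n
        have hpos : (0 : ℝ) < Real.exp (g x) / Zn := by positivity
        simp only [Pi.add_apply, Real.norm_eq_abs, abs_mul]
        rw [abs_of_pos hpos, abs_of_nonneg (by positivity :
            (0 : ℝ) ≤ (((n : ℝ) + 1) * Real.exp (n : ℝ) + Real.exp (n : ℝ) * Real.exp (h x)) / Zn)]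
        calc |h x| * (Real.exp (g x) / Zn) = |h x| * Real.exp (g x) / Zn := by ring
          _ ≤ (((n : ℝ) + 1) * Real.exp (n : ℝ) + Real.exp (n : ℝ) * Real.exp (h x)) / Zn := by
              gcongr
      -- h is integrable w.r.t. ρn
      have hint_h : Integrable h ρn := by
        have htilted : ρn = π.withDensity fun x => ENNReal.ofReal (Real.exp (g x) / Zn) := rfl
        rw [htilted, integrable_withDensity_iff
          (hgmeas.exp.div_const Zn).ennreal_ofReal
          (ae_of_all _ fun x => ENNReal.ofReal_lt_top)]
        refine hint_hg.congr (ae_of_all _ fun x => ?_)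
        simp only []
        rw [ENNReal.toReal_ofReal (by positivity : (0:ℝ) ≤ Real.exp (g x) / Zn)]
      -- g is integrable w.r.t. ρn
      have hint_g : Integrable g ρn := by
        refine (hint_h.abs.add (integrable_const (n : ℝ))).mono
          hgmeas.aestronglyMeasurable (ae_of_all _ fun x => ?_)
        simp only [Pi.add_apply, Real.norm_eq_abs]
        rw [abs_of_nonneg (by positivity : (0:ℝ) ≤ |h x| + (n : ℝ))]
        calc |g x| ≤ max |h x| |(n : ℝ)| := abs_min_le_max_abs_abs
          _ ≤ |h x| + (n : ℝ) := by
              rw [abs_of_nonneg (Nat.cast_nonneg n : (0:ℝ) ≤ (n : ℝ))]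
              exact max_le (le_add_of_nonneg_right (Nat.cast_nonneg n))
                (le_add_of_nonneg_left (abs_nonneg _))
      -- the log-likelihood ratio of ρn w.r.t. π
      have hllr_ae : (fun x => Real.log ((ρn.rnDeriv π x).toReal))
          =ᵐ[ρn] fun x => g x - Real.log Zn :=
        habs.ae_le (log_rnDeriv_tilted_left_self hgexp_int)
      have hllr_int : Integrable (fun x => Real.log ((ρn.rnDeriv π x).toReal)) ρn :=
        (hint_g.sub (integrable_const _)).congr hllr_ae.symm
      have hKL_pos : KL ρn π = ((∫ x, g x ∂ρn - Real.log Zn : ℝ) : EReal) := by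
        rw [KL, if_pos ⟨habs, hllr_int⟩]
        congr 1
        rw [integral_congr_ae hllr_ae, integral_sub hint_g (integrable_const _), integral_const]
        simp
      have hKL_lt : KL ρn π < ⊤ := by
        rw [hKL_pos]; exact EReal.coe_lt_top _
      have hval : ((Real.log Zn : ℝ) : EReal) ≤
          ((∫ x, h x ∂ρn : ℝ) : EReal) - KL ρn π := by
        rw [hKL_pos, ← EReal.coe_sub]
        refine EReal.coe_le_coe_iff.mpr ?_
        have hle : ∫ x, g x ∂ρn ≤ ∫ x, h x ∂ρn :=
          integral_mono hint_g hint_h fun x => min_le_left _ _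
        linarith
      exact hval.trans (le_iSup (fun ρ : {ρ : Measure X // IsProbabilityMeasure ρ ∧
        KL ρ π < ⊤ ∧ Integrable h ρ} => (((∫ x, h x ∂ρ.1 : ℝ) : EReal) - KL ρ.1 π))
        ⟨ρn, hρn_prob, hKL_lt, hint_h⟩)
    -- pass to the limit n → ∞
    have h1 : Filter.Tendsto (fun n : ℕ => ∫ x, Real.exp (min (h x) n) ∂π)
        Filter.atTop (nhds (∫ x, Real.exp (h x) ∂π)) := by
      refine tendsto_integral_of_dominated_convergence (fun x => Real.exp (h x))
        (fun n => ((hmeas.min measurable_const).exp).aestronglyMeasurable) hint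
        (fun n => ae_of_all _ fun x => ?_) (ae_of_all _ fun x => ?_)
      · rw [Real.norm_eq_abs, abs_of_pos (Real.exp_pos _)]
        exact Real.exp_le_exp.mpr (min_le_left _ _)
      · refine Filter.Tendsto.congr' ?_ tendsto_const_nhds
        filter_upwards [Filter.eventually_ge_atTop ⌈h x⌉₊] with n hn
        rw [min_eq_left (le_trans (Nat.le_ceil _) (by exact_mod_cast hn))]
    have htend : Filter.Tendsto
        (fun n : ℕ => ((Real.log (∫ x, Real.exp (min (h x) n) ∂π) : ℝ) : EReal))
        Filter.atTop (nhds ((Real.log (∫ x, Real.exp (h x) ∂π) : ℝ) : EReal)) := by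
      rw [EReal.tendsto_coe]
      exact (Real.continuousAt_log hZpos.ne').tendsto.comp h1
    exact le_of_tendsto' htend key
  · refine iSup_le fun ρ => ?_
    obtain ⟨hprob, hKL, hh⟩ := ρ.2
    have hcond : ρ.1 ≪ π ∧ Integrable (fun x => Real.log (ρ.1.rnDeriv π x).toReal) ρ.1 := by
      by_contra hc
      rw [KL, if_neg hc] at hKL
      exact absurd hKL (lt_irrefl _)
    rw [KL, if_pos hcond, ← EReal.coe_sub]
    haveI := hprob
    exact EReal.coe_le_coe_iff.mpr (gibbs_aux π ρ.1 hcond.1 hmeas hint hh hcond.2)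
end

section
/- (Optimality of the mean-field coordinate update.) Let (X₁, μ₁) and (X₂, μ₂) be σ-finite measure spaces, and let π be a probability measure on X₁ × X₂ with strictly positive density p with respect to μ₁ ⊗ μ₂. Fix a probability density q₂ with respect to μ₂ such that x₁ ↦ ∫ log p(x₁, x₂) q₂(x₂) dμ₂(x₂) is well defined μ₁-a.e. and such that c = ∫ exp( ∫ log p(x₁, x₂) q₂(x₂) dμ₂(x₂) ) dμ₁(x₁) ∈ (0, ∞). Define q₁*(x₁) = c^{-1} exp( ∫ log p(x₁, x₂) q₂(x₂) dμ₂(x₂) ). Then for every probability density q₁ with respect to μ₁ for which KL((q₁ dμ₁) ⊗ (q₂ dμ₂), π) < ∞, one has KL((q₁* dμ₁) ⊗ (q₂ dμ₂), π) ≤ KL((q₁ dμ₁) ⊗ (q₂ dμ₂), π), i.e. q₁* minimizes the Kullback–Leibler divergence to π over product measures with second factor q₂ dμ₂ fixed. -/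
open MeasureTheory

open Classical in
lemma KL_eq_withDensity {X : Type*} [MeasurableSpace X] (π : Measure X) [SigmaFinite π]
    {h : X → ENNReal} (hh : Measurable h)
    {ρ : Measure X} (hρ : ρ = π.withDensity h) {G : X → ℝ}
    (hG : ∀ᵐ x ∂ρ, Real.log (h x).toReal = G x) :
    KL ρ π = if Integrable G ρ then ((∫ x, G x ∂ρ : ℝ) : EReal) else ⊤ := by
  have hac : ρ ≪ π := hρ ▸ withDensity_absolutelyContinuous π h
  have hrn : ρ.rnDeriv π =ᵐ[π] h := hρ ▸ Measure.rnDeriv_withDensity π hh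
  have hrn' : ρ.rnDeriv π =ᵐ[ρ] h := hrn.filter_mono hac.ae_le
  have heq : (fun x => Real.log (ρ.rnDeriv π x).toReal) =ᵐ[ρ] G := by
    filter_upwards [hrn', hG] with x h1 h2
    rw [h1, h2]
  rw [KL]
  by_cases hInt : Integrable G ρ
  · rw [if_pos ⟨hac, (integrable_congr heq).mpr hInt⟩, if_pos hInt, integral_congr_ae heq]
  · rw [if_neg, if_neg hInt]
    rintro ⟨-, hi⟩
    exact hInt ((integrable_congr heq).mp hi)

lemma withDensity_prod_withDensity {X₁ X₂ : Type*} [MeasurableSpace X₁] [MeasurableSpace X₂]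
    (μ₁ : Measure X₁) (μ₂ : Measure X₂) [SigmaFinite μ₁] [SigmaFinite μ₂]
    {f : X₁ → ENNReal} {g : X₂ → ENNReal} (hf : Measurable f) (hg : Measurable g)
    [SigmaFinite (μ₁.withDensity f)] [SigmaFinite (μ₂.withDensity g)] :
    (μ₁.withDensity f).prod (μ₂.withDensity g)
      = (μ₁.prod μ₂).withDensity (fun z => f z.1 * g z.2) :=
  Measure.prod_eq fun s t hs ht => by
    rw [withDensity_apply _ (hs.prod ht), ← Measure.prod_restrict,
      lintegral_prod_mul hf.aemeasurable hg.aemeasurable,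
      withDensity_apply _ hs, withDensity_apply _ ht]

lemma young_aux {t s : ℝ} (ht : 0 < t) : t * s ≤ t * Real.log t + Real.exp s := by
  have h1 : s - Real.log t + 1 ≤ Real.exp (s - Real.log t) := Real.add_one_le_exp _
  have h3 : t * Real.exp (s - Real.log t) = Real.exp s := by
    rw [Real.exp_sub, Real.exp_log ht]; field_simp
  nlinarith [mul_le_mul_of_nonneg_left h1 ht.le]

lemma pos_part_sub_neg_part (a : ℝ) : max a 0 - max (-a) 0 = a := by
  rcases le_total a 0 with h | h
  · rw [max_eq_right h, max_eq_left (neg_nonneg.mpr h)]; ring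
  · rw [max_eq_left h, max_eq_right (neg_nonpos.mpr h)]; ring

lemma nnnorm_split (a : ℝ) :
    (‖a‖₊ : ENNReal) = ENNReal.ofReal (max a 0) + ENNReal.ofReal (max (-a) 0) := by
  rw [← ENNReal.ofReal_add (le_max_right _ _) (le_max_right _ _), ← enorm_eq_nnnorm, Real.enorm_eq_ofReal_abs]
  congr 1
  rcases le_total a 0 with h | h
  · rw [abs_of_nonpos h, max_eq_right h, max_eq_left (neg_nonneg.mpr h)]; ring
  · rw [abs_of_nonneg h, max_eq_left h, max_eq_right (neg_nonpos.mpr h)]; ring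

/-- **Optimality of the mean-field coordinate update.** With `π` a probability measure on
`X₁ × X₂` having strictly positive density `p` w.r.t. `μ₁ ⊗ μ₂`, a fixed density
`q₂` w.r.t. `μ₂`, and `q₁⋆(x₁) = c⁻¹ exp(∫ log p(x₁,x₂) q₂(x₂) dμ₂)` with
`c = ∫ exp(∫ log p(x₁,x₂) q₂(x₂) dμ₂) dμ₁ ∈ (0,∞)`, the density `q₁⋆` minimizes
`q₁ ↦ KL((q₁ dμ₁) ⊗ (q₂ dμ₂), π)` over probability densities `q₁` w.r.t. `μ₁`. -/
theorem mean_field_coordinate_update_optimal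
    {X₁ X₂ : Type*} [MeasurableSpace X₁] [MeasurableSpace X₂]
    (μ₁ : Measure X₁) (μ₂ : Measure X₂) [SigmaFinite μ₁] [SigmaFinite μ₂]
    (p : X₁ × X₂ → ℝ) (hp_meas : Measurable p) (hp_pos : ∀ x, 0 < p x)
    (π : Measure (X₁ × X₂)) [IsProbabilityMeasure π]
    (hπ : π = (μ₁.prod μ₂).withDensity (fun x => ENNReal.ofReal (p x)))
    (q₂ : X₂ → ℝ) (hq₂_meas : Measurable q₂) (hq₂_nonneg : ∀ x, 0 ≤ q₂ x)
    (hq₂_prob : IsProbabilityMeasure (μ₂.withDensity fun x => ENNReal.ofReal (q₂ x)))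
    (hwell : ∀ᵐ x₁ ∂μ₁, Integrable (fun x₂ => Real.log (p (x₁, x₂)) * q₂ x₂) μ₂)
    (c : ℝ)
    (hc : c = ∫ x₁, Real.exp (∫ x₂, Real.log (p (x₁, x₂)) * q₂ x₂ ∂μ₂) ∂μ₁)
    (hc_pos : 0 < c)
    (hc_int : Integrable (fun x₁ => Real.exp (∫ x₂, Real.log (p (x₁, x₂)) * q₂ x₂ ∂μ₂)) μ₁)
    (q₁star : X₁ → ℝ)
    (hq₁star : ∀ x₁,
      q₁star x₁ = c⁻¹ * Real.exp (∫ x₂, Real.log (p (x₁, x₂)) * q₂ x₂ ∂μ₂)) :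
    ∀ q₁ : X₁ → ℝ, Measurable q₁ → (∀ x, 0 ≤ q₁ x) →
      IsProbabilityMeasure (μ₁.withDensity fun x => ENNReal.ofReal (q₁ x)) →
      KL ((μ₁.withDensity fun x => ENNReal.ofReal (q₁ x)).prod
          (μ₂.withDensity fun x => ENNReal.ofReal (q₂ x))) π < ⊤ →
      KL ((μ₁.withDensity fun x => ENNReal.ofReal (q₁star x)).prod
          (μ₂.withDensity fun x => ENNReal.ofReal (q₂ x))) π ≤
      KL ((μ₁.withDensity fun x => ENNReal.ofReal (q₁ x)).prod
          (μ₂.withDensity fun x => ENNReal.ofReal (q₂ x))) π := by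
  classical
  intro q₁ hq₁m hq₁0 hq₁prob hfin
  set ν₂ : Measure X₂ := μ₂.withDensity (fun x => ENNReal.ofReal (q₂ x)) with hν₂
  set ν₁ : Measure X₁ := μ₁.withDensity (fun x => ENNReal.ofReal (q₁ x)) with hν₁
  set ν₁s : Measure X₁ := μ₁.withDensity (fun x => ENNReal.ofReal (q₁star x)) with hν₁s
  set m : X₁ → ℝ := fun x₁ => ∫ x₂, Real.log (p (x₁, x₂)) * q₂ x₂ ∂μ₂ with hm
  haveI hP2 : IsProbabilityMeasure ν₂ := hq₂_prob
  haveI hP1 : IsProbabilityMeasure ν₁ := hq₁prob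
  have hq₂e : Measurable fun x => ENNReal.ofReal (q₂ x) := ENNReal.measurable_ofReal.comp hq₂_meas
  have hq₁e : Measurable fun x => ENNReal.ofReal (q₁ x) := ENNReal.measurable_ofReal.comp hq₁m
  have hm_meas : Measurable m := by
    have : StronglyMeasurable fun z : X₁ × X₂ => Real.log (p z) * q₂ z.2 :=
      ((Real.measurable_log.comp hp_meas).mul (hq₂_meas.comp measurable_snd)).stronglyMeasurable
    exact this.integral_prod_right'.measurable
  have hq₁s_eq : q₁star = fun x₁ => c⁻¹ * Real.exp (m x₁) := funext hq₁star
  have hq₁s_meas : Measurable q₁star := by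
    rw [hq₁s_eq]; exact measurable_const.mul (Real.measurable_exp.comp hm_meas)
  have hq₁s_pos : ∀ x₁, 0 < q₁star x₁ := fun x₁ => by rw [hq₁star x₁]; positivity
  have hq₁se : Measurable fun x => ENNReal.ofReal (q₁star x) :=
    ENNReal.measurable_ofReal.comp hq₁s_meas
  have hq₁s_int : Integrable q₁star μ₁ := by rw [hq₁s_eq]; exact hc_int.const_mul _
  have hq₁s_one : ∫ x, q₁star x ∂μ₁ = 1 := by
    rw [hq₁s_eq]
    rw [integral_const_mul, ← hc, inv_mul_cancel₀ hc_pos.ne']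
  haveI hPs : IsProbabilityMeasure ν₁s := by
    constructor
    rw [hν₁s, withDensity_apply _ MeasurableSet.univ, Measure.restrict_univ,
      ← ofReal_integral_eq_lintegral_ofReal hq₁s_int
        (Filter.Eventually.of_forall fun x => (hq₁s_pos x).le),
      hq₁s_one, ENNReal.ofReal_one]
  have hlogq₁s : ∀ x₁, Real.log (q₁star x₁) = m x₁ - Real.log c := fun x₁ => by
    rw [hq₁star x₁, Real.log_mul (by positivity) (Real.exp_pos _).ne', Real.log_inv, Real.log_exp]
    ring
  -- a.e. positivity of a density under its withDensity measure
  have hrpos_ae : ∀ r : X₁ → ℝ, Measurable r → (∀ x, 0 ≤ r x) →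
      ∀ᵐ x₁ ∂(μ₁.withDensity fun x => ENNReal.ofReal (r x)), 0 < r x₁ := by
    intro r hrm hr0
    refine (ae_withDensity_iff hrm.ennreal_ofReal).mpr
      (Filter.Eventually.of_forall fun x hx => ?_)
    rcases (hr0 x).lt_or_eq with h | h
    · exact h
    · exact absurd (by rw [← h, ENNReal.ofReal_zero]) hx
  have hq₂_pos_ae : ∀ᵐ x₂ ∂ν₂, 0 < q₂ x₂ := by
    rw [hν₂]
    refine (ae_withDensity_iff hq₂e).mpr (Filter.Eventually.of_forall fun x hx => ?_)
    rcases (hq₂_nonneg x).lt_or_eq with h | h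
    · exact h
    · exact absurd (by rw [← h, ENNReal.ofReal_zero]) hx
  -- integrability transfer to ν₂
  have conv₂ : ∀ f : X₂ → ℝ, Integrable f ν₂ ↔ Integrable (fun x => f x * q₂ x) μ₂ := by
    intro f
    rw [hν₂, integrable_withDensity_iff hq₂e
      (Filter.Eventually.of_forall fun x => ENNReal.ofReal_lt_top)]
    have : (fun x => f x * (ENNReal.ofReal (q₂ x)).toReal) = fun x => f x * q₂ x :=
      funext fun x => by rw [ENNReal.toReal_ofReal (hq₂_nonneg x)]
    rw [this]
  -- integral transfer to ν₂
  have hint₂ : ∀ f : X₂ → ℝ, ∫ x, f x ∂ν₂ = ∫ x, q₂ x * f x ∂μ₂ := by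
    intro f
    rw [hν₂]
    have h0 : (μ₂.withDensity fun x => ENNReal.ofReal (q₂ x))
        = μ₂.withDensity fun x => ((Real.toNNReal (q₂ x) : NNReal) : ENNReal) := rfl
    rw [h0, integral_withDensity_eq_integral_smul hq₂_meas.real_toNNReal]
    congr 1
    funext x
    rw [NNReal.smul_def, Real.coe_toNNReal _ (hq₂_nonneg x), smul_eq_mul]
  have hint₁ : ∀ f : X₁ → ℝ, ∫ x, f x ∂ν₁ = ∫ x, q₁ x * f x ∂μ₁ := by
    intro f
    rw [hν₁]
    have h0 : (μ₁.withDensity fun x => ENNReal.ofReal (q₁ x))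
        = μ₁.withDensity fun x => ((Real.toNNReal (q₁ x) : NNReal) : ENNReal) := rfl
    rw [h0, integral_withDensity_eq_integral_smul hq₁m.real_toNNReal]
    congr 1
    funext x
    rw [NNReal.smul_def, Real.coe_toNNReal _ (hq₁0 x), smul_eq_mul]
  have hm_eq : ∀ x₁, ∫ x₂, Real.log (p (x₁, x₂)) ∂ν₂ = m x₁ := by
    intro x₁
    rw [hint₂, hm]
    simp_rw [mul_comm]
  have hwell₂ : ∀ᵐ x₁ ∂μ₁, Integrable (fun x₂ => Real.log (p (x₁, x₂))) ν₂ := by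
    filter_upwards [hwell] with x₁ h using (conv₂ _).mpr h
  -- the product measures as densities w.r.t. π
  have hprod : ∀ r : X₁ → ℝ, Measurable r → (∀ x, 0 ≤ r x) →
      (μ₁.withDensity fun x => ENNReal.ofReal (r x)).prod ν₂
        = π.withDensity (fun z => ENNReal.ofReal (r z.1 * q₂ z.2 / p z)) := by
    intro r hrm hr0
    have hre : Measurable fun x => ENNReal.ofReal (r x) := hrm.ennreal_ofReal
    have hhe : Measurable fun z : X₁ × X₂ => ENNReal.ofReal (r z.1 * q₂ z.2 / p z) :=
      (((hrm.comp measurable_fst).mul (hq₂_meas.comp measurable_snd)).div hp_meas).ennreal_ofReal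
    rw [hν₂, withDensity_prod_withDensity μ₁ μ₂ hre hq₂e, hπ,
      ← withDensity_mul _ hp_meas.ennreal_ofReal hhe]
    congr 1
    funext z
    show ENNReal.ofReal (r z.1) * ENNReal.ofReal (q₂ z.2)
        = ENNReal.ofReal (p z) * ENNReal.ofReal (r z.1 * q₂ z.2 / p z)
    rw [← ENNReal.ofReal_mul (hp_pos z).le, mul_comm (p z),
      div_mul_cancel₀ _ (hp_pos z).ne', ENNReal.ofReal_mul (hr0 z.1)]
  -- KL in terms of the explicit integrand
  have hKLform : ∀ r : X₁ → ℝ, Measurable r → (∀ x, 0 ≤ r x) →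
      KL ((μ₁.withDensity fun x => ENNReal.ofReal (r x)).prod ν₂) π
        = if Integrable (fun z : X₁ × X₂ => Real.log (r z.1 * q₂ z.2 / p z))
            ((μ₁.withDensity fun x => ENNReal.ofReal (r x)).prod ν₂)
          then ((∫ z, Real.log (r z.1 * q₂ z.2 / p z)
            ∂((μ₁.withDensity fun x => ENNReal.ofReal (r x)).prod ν₂) : ℝ) : EReal)
          else ⊤ := by
    intro r hrm hr0
    refine KL_eq_withDensity (h := fun z : X₁ × X₂ => ENNReal.ofReal (r z.1 * q₂ z.2 / p z)) π
      ((((hrm.comp measurable_fst).mul (hq₂_meas.comp measurable_snd)).div hp_meas).ennreal_ofReal)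
      (hprod r hrm hr0) (Filter.Eventually.of_forall fun z => ?_)
    rw [ENNReal.toReal_ofReal (div_nonneg (mul_nonneg (hr0 z.1) (hq₂_nonneg z.2)) (hp_pos z).le)]
  -- the given q₁ has an integrable log-density
  have hKL₁ := hKLform q₁ hq₁m hq₁0
  rw [← hν₁] at hKL₁
  have hGint : Integrable (fun z : X₁ × X₂ => Real.log (q₁ z.1 * q₂ z.2 / p z)) (ν₁.prod ν₂) := by
    by_contra hcon
    rw [hKL₁, if_neg hcon] at hfin
    exact absurd hfin (lt_irrefl _)
  rw [hKL₁, if_pos hGint]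
  -- integrability of log q₂ with respect to ν₂
  have hlogq₂_int : Integrable (fun x₂ => Real.log (q₂ x₂)) ν₂ := by
    haveI : (MeasureTheory.ae ν₁).NeBot := IsProbabilityMeasure.ae_neBot
    have h1 : ∀ᵐ x₁ ∂ν₁, Integrable (fun x₂ => Real.log (q₁ x₁ * q₂ x₂ / p (x₁, x₂))) ν₂ :=
      hGint.prod_right_ae
    have h2 : ∀ᵐ x₁ ∂ν₁, Integrable (fun x₂ => Real.log (p (x₁, x₂))) ν₂ :=
      (withDensity_absolutelyContinuous μ₁ _).ae_le hwell₂
    have h3 : ∀ᵐ x₁ ∂ν₁, 0 < q₁ x₁ := hrpos_ae q₁ hq₁m hq₁0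
    obtain ⟨x₁, hx1, hx2, hx3⟩ := (h1.and (h2.and h3)).exists
    refine ((hx1.add hx2).sub (integrable_const (Real.log (q₁ x₁)))).congr ?_
    filter_upwards [hq₂_pos_ae] with y hy
    simp only [Pi.add_apply, Pi.sub_apply]
    rw [Real.log_div (mul_pos hx3 hy).ne' (hp_pos _).ne', Real.log_mul hx3.ne' hy.ne']
    ring
  set S : ℝ := ∫ x₂, Real.log (q₂ x₂) ∂ν₂ with hS
  -- key Fubini computation
  have key : ∀ r : X₁ → ℝ, Measurable r → (∀ x, 0 ≤ r x) →
      IsProbabilityMeasure (μ₁.withDensity fun x => ENNReal.ofReal (r x)) →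
      Integrable (fun z : X₁ × X₂ => Real.log (r z.1 * q₂ z.2 / p z))
        ((μ₁.withDensity fun x => ENNReal.ofReal (r x)).prod ν₂) →
      Integrable (fun x₁ => Real.log (r x₁) - m x₁)
          (μ₁.withDensity fun x => ENNReal.ofReal (r x)) ∧
        ∫ z, Real.log (r z.1 * q₂ z.2 / p z)
            ∂((μ₁.withDensity fun x => ENNReal.ofReal (r x)).prod ν₂)
          = (∫ x₁, (Real.log (r x₁) - m x₁)
              ∂(μ₁.withDensity fun x => ENNReal.ofReal (r x))) + S := by
    intro r hrm hr0 hrprob hInt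
    haveI := hrprob
    have houter : Integrable
        (fun x₁ => ∫ y, Real.log (r x₁ * q₂ y / p (x₁, y)) ∂ν₂)
        (μ₁.withDensity fun x => ENNReal.ofReal (r x)) := hInt.integral_prod_left
    have hsec_eq : ∀ᵐ x₁ ∂(μ₁.withDensity fun x => ENNReal.ofReal (r x)),
        ∫ y, Real.log (r x₁ * q₂ y / p (x₁, y)) ∂ν₂ = (Real.log (r x₁) - m x₁) + S := by
      filter_upwards [hrpos_ae r hrm hr0,
        (withDensity_absolutelyContinuous μ₁ _).ae_le hwell₂] with x₁ hpos hx
      have h1 : (fun y => Real.log (r x₁ * q₂ y / p (x₁, y)))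
          =ᵐ[ν₂] fun y => (Real.log (r x₁) + Real.log (q₂ y)) - Real.log (p (x₁, y)) := by
        filter_upwards [hq₂_pos_ae] with y hy
        rw [Real.log_div (mul_pos hpos hy).ne' (hp_pos _).ne', Real.log_mul hpos.ne' hy.ne']
      rw [integral_congr_ae h1]
      have e1 : ∫ y, (Real.log (r x₁) + Real.log (q₂ y)) - Real.log (p (x₁, y)) ∂ν₂
          = (∫ y, (Real.log (r x₁) + Real.log (q₂ y)) ∂ν₂) - ∫ y, Real.log (p (x₁, y)) ∂ν₂ :=
        integral_sub ((integrable_const _).add hlogq₂_int) hx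
      have e2 : ∫ y, (Real.log (r x₁) + Real.log (q₂ y)) ∂ν₂
          = (∫ _, Real.log (r x₁) ∂ν₂) + ∫ y, Real.log (q₂ y) ∂ν₂ :=
        integral_add (integrable_const _) hlogq₂_int
      rw [e1, e2, integral_const, probReal_univ, one_smul, hm_eq x₁, ← hS]
      ring
    have houter' : Integrable (fun x₁ => (Real.log (r x₁) - m x₁) + S)
        (μ₁.withDensity fun x => ENNReal.ofReal (r x)) := houter.congr hsec_eq
    have hFint : Integrable (fun x₁ => Real.log (r x₁) - m x₁)
        (μ₁.withDensity fun x => ENNReal.ofReal (r x)) := by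
      refine (houter'.sub (integrable_const S)).congr (Filter.Eventually.of_forall fun x => ?_)
      simp only [Pi.sub_apply]
      ring
    refine ⟨hFint, ?_⟩
    rw [integral_prod _ hInt, integral_congr_ae hsec_eq,
      integral_add hFint (integrable_const S), integral_const, probReal_univ,
      one_smul]
  have hπmass : ∫⁻ z, ENNReal.ofReal (p z) ∂(μ₁.prod μ₂) = 1 := by
    have h := measure_univ (μ := π)
    rw [hπ, withDensity_apply _ MeasurableSet.univ, Measure.restrict_univ] at h
    exact h
  have hq₁s_mass : ∫⁻ x, ENNReal.ofReal (q₁star x) ∂μ₁ = 1 := by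
    rw [← ofReal_integral_eq_lintegral_ofReal hq₁s_int
      (Filter.Eventually.of_forall fun x => (hq₁s_pos x).le), hq₁s_one, ENNReal.ofReal_one]
  -- measurability of the positive/negative parts of d
  have hd_meas : Measurable (fun z : X₁ × X₂ => Real.log (p z) - m z.1) :=
    (Real.measurable_log.comp hp_meas).sub (hm_meas.comp measurable_fst)
  have hmaxp : Measurable (fun z : X₁ × X₂ => ENNReal.ofReal (max (Real.log (p z) - m z.1) 0)) :=
    (hd_meas.max measurable_const).ennreal_ofReal
  have hmaxm : Measurable
      (fun z : X₁ × X₂ => ENNReal.ofReal (max (-(Real.log (p z) - m z.1)) 0)) :=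
    (hd_meas.neg.max measurable_const).ennreal_ofReal
  -- positivity of q₂ a.e. on the product
  have hq₂pos_prod : ∀ᵐ z ∂(ν₁s.prod ν₂), 0 < q₂ z.2 := by
    rw [ae_iff]
    have hset : {z : X₁ × X₂ | ¬0 < q₂ z.2} = Set.univ ×ˢ {x₂ | ¬0 < q₂ x₂} := by
      ext z; simp
    rw [hset, Measure.prod_prod, ae_iff.mp hq₂_pos_ae, mul_zero]
  -- sections of d have equal positive and negative parts
  have hsec_d : ∀ x₁, Integrable (fun x₂ => Real.log (p (x₁, x₂))) ν₂ →
      ∫⁻ y, ENNReal.ofReal (max (-(Real.log (p (x₁, y)) - m x₁)) 0) ∂ν₂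
        = ∫⁻ y, ENNReal.ofReal (max (Real.log (p (x₁, y)) - m x₁) 0) ∂ν₂ := by
    intro x₁ hx
    have hdx : Integrable (fun y => Real.log (p (x₁, y)) - m x₁) ν₂ :=
      hx.sub (integrable_const _)
    have hint0 : ∫ y, (Real.log (p (x₁, y)) - m x₁) ∂ν₂ = 0 := by
      rw [integral_sub hx (integrable_const _), integral_const, probReal_univ,
        one_smul, hm_eq x₁, sub_self]
    have hdp : Integrable (fun y => max (Real.log (p (x₁, y)) - m x₁) 0) ν₂ := hdx.pos_part
    have hdm : Integrable (fun y => max (-(Real.log (p (x₁, y)) - m x₁)) 0) ν₂ :=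
      hdx.neg.pos_part
    have heq : ∫ y, max (Real.log (p (x₁, y)) - m x₁) 0 ∂ν₂
        = ∫ y, max (-(Real.log (p (x₁, y)) - m x₁)) 0 ∂ν₂ := by
      have hsub := integral_sub hdp hdm
      have h2 : (fun y => max (Real.log (p (x₁, y)) - m x₁) 0
            - max (-(Real.log (p (x₁, y)) - m x₁)) 0)
          = fun y => Real.log (p (x₁, y)) - m x₁ := funext fun y => pos_part_sub_neg_part _
      rw [h2, hint0] at hsub
      linarith [hsub]
    rw [← ofReal_integral_eq_lintegral_ofReal hdm
        (Filter.Eventually.of_forall fun y => le_max_right _ _),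
      ← ofReal_integral_eq_lintegral_ofReal hdp
        (Filter.Eventually.of_forall fun y => le_max_right _ _), heq]
  -- the key pointwise inequality
  have hreal : ∀ z : X₁ × X₂, q₁star z.1 * q₂ z.2 * max (Real.log (p z) - m z.1) 0
      ≤ c⁻¹ * p z + q₁star z.1 * (q₂ z.2 * max (Real.log (q₂ z.2)) 0) := by
    intro z
    have hqs : q₁star z.1 * Real.exp (Real.log (p z) - m z.1) = c⁻¹ * p z := by
      have harg : m z.1 + (Real.log (p z) - m z.1) = Real.log (p z) := by ring
      rw [hq₁star z.1, mul_assoc, ← Real.exp_add, harg, Real.exp_log (hp_pos z)]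
    have hterm2 : 0 ≤ q₁star z.1 * (q₂ z.2 * max (Real.log (q₂ z.2)) 0) :=
      mul_nonneg (hq₁s_pos z.1).le (mul_nonneg (hq₂_nonneg z.2) (le_max_right _ _))
    rcases le_or_gt (Real.log (p z) - m z.1) 0 with hd | hd
    · rw [max_eq_right hd, mul_zero]
      have : (0:ℝ) ≤ c⁻¹ * p z := mul_nonneg (inv_nonneg.mpr hc_pos.le) (hp_pos z).le
      linarith
    · rw [max_eq_left hd.le]
      rcases le_or_gt (q₂ z.2) 1 with h2 | h2
      · have hde : Real.log (p z) - m z.1 ≤ Real.exp (Real.log (p z) - m z.1) := by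
          have := Real.add_one_le_exp (Real.log (p z) - m z.1); linarith
        have hqd : q₂ z.2 * (Real.log (p z) - m z.1) ≤ Real.exp (Real.log (p z) - m z.1) := by
          nlinarith [hq₂_nonneg z.2]
        nlinarith [mul_le_mul_of_nonneg_left hqd (hq₁s_pos z.1).le]
      · have hy := young_aux (t := q₂ z.2) (s := Real.log (p z) - m z.1)
          (lt_trans one_pos h2)
        rw [max_eq_left (Real.log_nonneg h2.le)]
        nlinarith [mul_le_mul_of_nonneg_left hy (hq₁s_pos z.1).le]
  -- finiteness of the integral of the positive part of d against ρ⋆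
  have hL : ∫⁻ x, ENNReal.ofReal (q₂ x * max (Real.log (q₂ x)) 0) ∂μ₂ < ⊤ := by
    have hb : ∀ x, ENNReal.ofReal (q₂ x * max (Real.log (q₂ x)) 0)
        ≤ ENNReal.ofReal (q₂ x) * ‖Real.log (q₂ x)‖₊ := fun x => by
      rw [ENNReal.ofReal_mul (hq₂_nonneg x), ← enorm_eq_nnnorm, Real.enorm_eq_ofReal_abs]
      exact mul_le_mul_right (ENNReal.ofReal_le_ofReal
        (max_le (le_abs_self _) (abs_nonneg _))) _
    calc ∫⁻ x, ENNReal.ofReal (q₂ x * max (Real.log (q₂ x)) 0) ∂μ₂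
        ≤ ∫⁻ x, ENNReal.ofReal (q₂ x) * ‖Real.log (q₂ x)‖₊ ∂μ₂ := lintegral_mono hb
      _ = ∫⁻ x, ‖Real.log (q₂ x)‖₊ ∂ν₂ := by
          have hnm : Measurable fun x => (‖Real.log (q₂ x)‖₊ : ENNReal) :=
            (show Measurable fun x => Real.log (q₂ x) from
              Real.measurable_log.comp hq₂_meas).enorm
          rw [hν₂, lintegral_withDensity_eq_lintegral_mul _ hq₂e hnm]
          exact lintegral_congr fun x => rfl
      _ < ⊤ := hlogq₂_int.2
  have hIp : ∫⁻ z, ENNReal.ofReal (max (Real.log (p z) - m z.1) 0) ∂(ν₁s.prod ν₂) < ⊤ := by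
    have hdens : Measurable fun z : X₁ × X₂ =>
        ENNReal.ofReal (q₁star z.1) * ENNReal.ofReal (q₂ z.2) :=
      ((hq₁se.comp measurable_fst).mul (hq₂e.comp measurable_snd))
    rw [hν₁s, hν₂, withDensity_prod_withDensity μ₁ μ₂ hq₁se hq₂e,
      lintegral_withDensity_eq_lintegral_mul _ hdens hmaxp]
    have hstep : ∀ z : X₁ × X₂,
        ((fun z : X₁ × X₂ => ENNReal.ofReal (q₁star z.1) * ENNReal.ofReal (q₂ z.2)) *
          fun z : X₁ × X₂ => ENNReal.ofReal (max (Real.log (p z) - m z.1) 0)) z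
        ≤ ENNReal.ofReal (c⁻¹ * p z)
          + ENNReal.ofReal (q₁star z.1 * (q₂ z.2 * max (Real.log (q₂ z.2)) 0)) := by
      intro z
      simp only [Pi.mul_apply]
      rw [← ENNReal.ofReal_mul (hq₁s_pos z.1).le,
        ← ENNReal.ofReal_mul (mul_nonneg (hq₁s_pos z.1).le (hq₂_nonneg z.2)),
        ← ENNReal.ofReal_add (mul_nonneg (inv_nonneg.mpr hc_pos.le) (hp_pos z).le)
          (mul_nonneg (hq₁s_pos z.1).le (mul_nonneg (hq₂_nonneg z.2) (le_max_right _ _)))]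
      exact ENNReal.ofReal_le_ofReal (hreal z)
    calc ∫⁻ z, ((fun z : X₁ × X₂ => ENNReal.ofReal (q₁star z.1) * ENNReal.ofReal (q₂ z.2)) *
          fun z : X₁ × X₂ => ENNReal.ofReal (max (Real.log (p z) - m z.1) 0)) z ∂(μ₁.prod μ₂)
        ≤ ∫⁻ z, (ENNReal.ofReal (c⁻¹ * p z)
            + ENNReal.ofReal (q₁star z.1 * (q₂ z.2 * max (Real.log (q₂ z.2)) 0)))
            ∂(μ₁.prod μ₂) := lintegral_mono hstep
      _ = (∫⁻ z, ENNReal.ofReal (c⁻¹ * p z) ∂(μ₁.prod μ₂))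
          + ∫⁻ z, ENNReal.ofReal (q₁star z.1 * (q₂ z.2 * max (Real.log (q₂ z.2)) 0))
            ∂(μ₁.prod μ₂) :=
          lintegral_add_left ((hp_meas.const_mul _).ennreal_ofReal) _
      _ < ⊤ := by
          have e1 : ∫⁻ z, ENNReal.ofReal (c⁻¹ * p z) ∂(μ₁.prod μ₂)
              = ENNReal.ofReal c⁻¹ := by
            simp_rw [ENNReal.ofReal_mul (le_of_lt (inv_pos.mpr hc_pos))]
            rw [lintegral_const_mul _ hp_meas.ennreal_ofReal, hπmass, mul_one]
          have e2 : ∫⁻ z, ENNReal.ofReal (q₁star z.1 * (q₂ z.2 * max (Real.log (q₂ z.2)) 0))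
              ∂(μ₁.prod μ₂)
              = ∫⁻ x, ENNReal.ofReal (q₂ x * max (Real.log (q₂ x)) 0) ∂μ₂ := by
            have hq₂L : Measurable fun x => ENNReal.ofReal (q₂ x * max (Real.log (q₂ x)) 0) :=
              (hq₂_meas.mul ((show Measurable fun x => Real.log (q₂ x) from
                Real.measurable_log.comp hq₂_meas).max measurable_const)).ennreal_ofReal
            simp_rw [ENNReal.ofReal_mul (hq₁s_pos _).le]
            rw [lintegral_prod_mul hq₁se.aemeasurable hq₂L.aemeasurable, hq₁s_mass, one_mul]
          rw [e1, e2]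
          exact ENNReal.add_lt_top.mpr ⟨ENNReal.ofReal_lt_top, hL⟩
  have hImIp : ∫⁻ z, ENNReal.ofReal (max (-(Real.log (p z) - m z.1)) 0) ∂(ν₁s.prod ν₂)
      = ∫⁻ z, ENNReal.ofReal (max (Real.log (p z) - m z.1) 0) ∂(ν₁s.prod ν₂) := by
    rw [lintegral_prod _ hmaxm.aemeasurable, lintegral_prod _ hmaxp.aemeasurable]
    refine lintegral_congr_ae ?_
    have hw : ∀ᵐ x₁ ∂ν₁s, Integrable (fun x₂ => Real.log (p (x₁, x₂))) ν₂ :=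
      (withDensity_absolutelyContinuous μ₁ _).ae_le hwell₂
    filter_upwards [hw] with x₁ hx
    exact hsec_d x₁ hx
  have hd_int : Integrable (fun z : X₁ × X₂ => Real.log (p z) - m z.1) (ν₁s.prod ν₂) := by
    refine ⟨hd_meas.aestronglyMeasurable, ?_⟩
    show ∫⁻ z, (‖Real.log (p z) - m z.1‖₊ : ENNReal) ∂(ν₁s.prod ν₂) < ⊤
    calc ∫⁻ z, (‖Real.log (p z) - m z.1‖₊ : ENNReal) ∂(ν₁s.prod ν₂)
        = ∫⁻ z, (ENNReal.ofReal (max (Real.log (p z) - m z.1) 0)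
            + ENNReal.ofReal (max (-(Real.log (p z) - m z.1)) 0)) ∂(ν₁s.prod ν₂) :=
          lintegral_congr fun z => nnnorm_split _
      _ = (∫⁻ z, ENNReal.ofReal (max (Real.log (p z) - m z.1) 0) ∂(ν₁s.prod ν₂))
          + ∫⁻ z, ENNReal.ofReal (max (-(Real.log (p z) - m z.1)) 0) ∂(ν₁s.prod ν₂) :=
          lintegral_add_left hmaxp _
      _ < ⊤ := by rw [hImIp]; exact ENNReal.add_lt_top.mpr ⟨hIp, hIp⟩
  have hlog₂snd : Integrable (fun z : X₁ × X₂ => Real.log (q₂ z.2)) (ν₁s.prod ν₂) := by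
    have hmap : (ν₁s.prod ν₂).map Prod.snd = ν₂ := Measure.snd_prod
    have h2 : Integrable ((fun x₂ => Real.log (q₂ x₂)) ∘ Prod.snd) (ν₁s.prod ν₂) := by
      rw [← integrable_map_measure ?_ measurable_snd.aemeasurable]
      · rwa [hmap]
      · rw [hmap]; exact hlogq₂_int.aestronglyMeasurable
    exact h2
  have hGsint : Integrable (fun z : X₁ × X₂ => Real.log (q₁star z.1 * q₂ z.2 / p z))
      (ν₁s.prod ν₂) := by
    refine (((integrable_const (-Real.log c)).add hlog₂snd).sub hd_int).congr ?_
    filter_upwards [hq₂pos_prod] with z hz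
    simp only [Pi.add_apply, Pi.sub_apply]
    rw [Real.log_div (mul_pos (hq₁s_pos z.1) hz).ne' (hp_pos z).ne',
      Real.log_mul (hq₁s_pos z.1).ne' hz.ne', hlogq₁s]
    ring
  -- apply the key computation to q₁ and q₁star
  have hGint' : Integrable (fun z : X₁ × X₂ => Real.log (q₁ z.1 * q₂ z.2 / p z))
      ((μ₁.withDensity fun x => ENNReal.ofReal (q₁ x)).prod ν₂) := by
    rw [← hν₁]; exact hGint
  have hprob1 : IsProbabilityMeasure (μ₁.withDensity fun x => ENNReal.ofReal (q₁ x)) := by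
    rw [← hν₁]; exact hP1
  obtain ⟨hF1, hv1⟩ := key q₁ hq₁m hq₁0 hprob1 hGint'
  have hGsint' : Integrable (fun z : X₁ × X₂ => Real.log (q₁star z.1 * q₂ z.2 / p z))
      ((μ₁.withDensity fun x => ENNReal.ofReal (q₁star x)).prod ν₂) := by
    rw [← hν₁s]; exact hGsint
  have hprobs : IsProbabilityMeasure (μ₁.withDensity fun x => ENNReal.ofReal (q₁star x)) := by
    rw [← hν₁s]; exact hPs
  obtain ⟨hFs, hvs⟩ := key q₁star hq₁s_meas (fun x => (hq₁s_pos x).le) hprobs hGsint'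
  rw [← hν₁] at hv1 hF1
  rw [← hν₁s] at hvs hFs
  -- value for q₁star
  have hstar_val : ∫ x₁, (Real.log (q₁star x₁) - m x₁) ∂ν₁s = -Real.log c := by
    have h2 : (fun x₁ => Real.log (q₁star x₁) - m x₁) = fun _ => -Real.log c :=
      funext fun x₁ => by rw [hlogq₁s]; ring
    rw [h2, integral_const, probReal_univ, one_smul]
  -- Gibbs inequality
  have hgibbs : -Real.log c ≤ ∫ x₁, (Real.log (q₁ x₁) - m x₁) ∂ν₁ := by
    have hdivint : Integrable (fun x₁ => q₁star x₁ / q₁ x₁) ν₁ := by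
      rw [hν₁, integrable_withDensity_iff hq₁e
        (Filter.Eventually.of_forall fun x => ENNReal.ofReal_lt_top)]
      have h0 : (fun x => (q₁star x / q₁ x) * (ENNReal.ofReal (q₁ x)).toReal)
          = fun x => (q₁star x / q₁ x) * q₁ x :=
        funext fun x => by rw [ENNReal.toReal_ofReal (hq₁0 x)]
      rw [h0]
      refine Integrable.mono hq₁s_int
        (((hq₁s_meas.div hq₁m).mul hq₁m).aestronglyMeasurable)
        (Filter.Eventually.of_forall fun x => ?_)
      rcases eq_or_ne (q₁ x) 0 with h | h
      · simp [h, Real.norm_eq_abs, abs_nonneg]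
      · rw [div_mul_cancel₀ _ h]
    have hptle : ∫ x₁, q₁star x₁ / q₁ x₁ ∂ν₁ ≤ 1 := by
      rw [hint₁]
      have hle : ∫ x, q₁ x * (q₁star x / q₁ x) ∂μ₁ ≤ ∫ x, q₁star x ∂μ₁ := by
        refine integral_mono_of_nonneg (Filter.Eventually.of_forall fun x => ?_) hq₁s_int
          (Filter.Eventually.of_forall fun x => ?_)
        · show (0:ℝ) ≤ q₁ x * (q₁star x / q₁ x)
          have h1 := hq₁0 x
          have h2 := (hq₁s_pos x).le
          positivity
        · show q₁ x * (q₁star x / q₁ x) ≤ q₁star x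
          rcases eq_or_ne (q₁ x) 0 with h | h
          · simp only [h, zero_mul]
            exact (hq₁s_pos x).le
          · rw [mul_comm, div_mul_cancel₀ _ h]
      calc ∫ x, q₁ x * (q₁star x / q₁ x) ∂μ₁ ≤ ∫ x, q₁star x ∂μ₁ := hle
        _ = 1 := hq₁s_one
    have hpt : ∀ᵐ x₁ ∂ν₁, -(Real.log (q₁ x₁) - m x₁) - Real.log c ≤ q₁star x₁ / q₁ x₁ - 1 := by
      have h3 : ∀ᵐ x₁ ∂ν₁, 0 < q₁ x₁ := hrpos_ae q₁ hq₁m hq₁0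
      filter_upwards [h3] with x₁ h
      have he : -(Real.log (q₁ x₁) - m x₁) - Real.log c = Real.log (q₁star x₁ / q₁ x₁) := by
        rw [Real.log_div (hq₁s_pos _).ne' h.ne', hlogq₁s]; ring
      rw [he]
      exact Real.log_le_sub_one_of_pos (div_pos (hq₁s_pos _) h)
    have hFneg : Integrable (fun x₁ => -(Real.log (q₁ x₁) - m x₁) - Real.log c) ν₁ :=
      (hF1.neg).sub (integrable_const (Real.log c))
    have hF1n : Integrable (fun x₁ => -(Real.log (q₁ x₁) - m x₁)) ν₁ := hF1.neg
    have hdiv1 : Integrable (fun x₁ => q₁star x₁ / q₁ x₁ - 1) ν₁ :=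
      hdivint.sub (integrable_const 1)
    have hmono := integral_mono_ae hFneg hdiv1 hpt
    rw [integral_sub hF1n (integrable_const _), integral_sub hdivint (integrable_const _),
      integral_neg, integral_const, integral_const, probReal_univ,
      one_smul, one_smul] at hmono
    linarith [hptle, hmono]
  -- conclude
  have hKLs := hKLform q₁star hq₁s_meas (fun x => (hq₁s_pos x).le)
  rw [← hν₁s] at hKLs
  rw [hKLs, if_pos hGsint, hvs, hv1, hstar_val]
  exact EReal.coe_le_coe_iff.mpr (by linarith [hgibbs])
end

section
/- (Closedness of the mean-field family.) Let X and Y be Polish spaces equipped with their Borel σ-algebras. The set { μ ⊗ ν : μ a Borel probability measure on X, ν a Borel probability measure on Y } of product probability measures is a closed subset of the space of Borel probability measures on X × Y equipped with the topology of weak convergence. More generally, for Polish spaces X₁, …, X_K, the set of probability measures on X₁ × ⋯ × X_K of the form ρ₁ ⊗ ⋯ ⊗ ρ_K is closed in the weak topology. -/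
open MeasureTheory

open MeasureTheory Set Filter Topology BoundedContinuousFunction
open scoped ENNReal NNReal

universe u

namespace MeanFieldAux




lemma tendsto_finset_prod_ennreal {ι γ : Type*} {F : Filter γ} (s : Finset ι)
    {f : ι → γ → ℝ≥0∞} {a : ι → ℝ≥0∞} (ha : ∀ i, a i ≠ ∞)
    (h : ∀ i, Tendsto (f i) F (𝓝 (a i))) :
    Tendsto (fun n => ∏ i ∈ s, f i n) F (𝓝 (∏ i ∈ s, a i)) := by
  classical
  induction s using Finset.induction_on with
  | empty => simpa using tendsto_const_nhds
  | @insert j t hj ih =>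
      simp only [Finset.prod_insert hj]
      exact ENNReal.Tendsto.mul (h j)
        (Or.inr (ENNReal.prod_lt_top (fun i _ => (ha i).lt_top)).ne) ih (Or.inr (ha j))

lemma lintegral_pi_prod : ∀ {n : ℕ} {α : Fin n → Type u} [∀ i, MeasurableSpace (α i)]
    (μ : ∀ i, Measure (α i)) [∀ i, IsProbabilityMeasure (μ i)]
    {f : ∀ i, α i → ℝ≥0∞} (_ : ∀ i, Measurable (f i)),
    ∫⁻ x, ∏ i, f i (x i) ∂Measure.pi μ = ∏ i, ∫⁻ y, f i y ∂μ i := by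
  intro n
  induction n with
  | zero => intro α _ μ _ f hf; simp
  | succ n ih =>
      intro α _ μ _ f hf
      have h0 := measurePreserving_piFinSuccAbove μ 0
      have hmeas : Measurable (fun p : α 0 × (∀ j, α ((0 : Fin (n+1)).succAbove j)) =>
          f 0 p.1 * ∏ j, f ((0 : Fin (n+1)).succAbove j) (p.2 j)) := by
        refine ((hf 0).comp measurable_fst).mul ?_
        exact Finset.measurable_prod _ (fun j _ => (hf _).comp ((measurable_pi_apply j).comp measurable_snd))
      calc ∫⁻ x, ∏ i, f i (x i) ∂Measure.pi μ
          = ∫⁻ x, f 0 (x 0) * ∏ j, f ((0 : Fin (n+1)).succAbove j) (x ((0 : Fin (n+1)).succAbove j))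
              ∂Measure.pi μ := by
            congr 1; funext x; exact Fin.prod_univ_succAbove (fun i => f i (x i)) 0
        _ = ∫⁻ p : α 0 × (∀ j, α ((0 : Fin (n+1)).succAbove j)),
              f 0 p.1 * ∏ j, f ((0 : Fin (n+1)).succAbove j) (p.2 j)
              ∂((μ 0).prod (Measure.pi fun j => μ ((0 : Fin (n+1)).succAbove j))) :=
            h0.lintegral_comp hmeas
        _ = (∫⁻ y, f 0 y ∂μ 0) * ∫⁻ y, ∏ j, f ((0 : Fin (n+1)).succAbove j) (y j)
              ∂(Measure.pi fun j => μ ((0 : Fin (n+1)).succAbove j)) :=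
            lintegral_prod_mul (f := f 0)
              (g := fun (y : ∀ j, α ((0 : Fin (n+1)).succAbove j)) => ∏ j, f ((0 : Fin (n+1)).succAbove j) (y j)) (hf 0).aemeasurable
              (Finset.measurable_prod _ (fun j _ => (hf _).comp (measurable_pi_apply j))).aemeasurable
        _ = (∫⁻ y, f 0 y ∂μ 0) * ∏ j, ∫⁻ y, f ((0 : Fin (n+1)).succAbove j) y
              ∂μ ((0 : Fin (n+1)).succAbove j) := by
            rw [ih _ (fun j => hf _)]
        _ = ∏ i, ∫⁻ y, f i y ∂μ i :=
            (Fin.prod_univ_succAbove (fun i => ∫⁻ y, f i y ∂μ i) 0).symm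

lemma map_eval_pi {n : ℕ} {α : Fin n → Type u} [∀ i, MeasurableSpace (α i)]
    (μ : ∀ i, Measure (α i)) [∀ i, IsProbabilityMeasure (μ i)] (i : Fin n) :
    (Measure.pi μ).map (Function.eval i) = μ i := by
  classical
  ext s hs
  rw [Measure.map_apply (measurable_pi_apply i) hs]
  have hset : Function.eval i ⁻¹' s = Set.pi univ (Function.update (fun j => (univ : Set (α j))) i s) := by
    ext x
    simp only [mem_preimage, mem_univ_pi]
    constructor
    · intro hx j
      rcases eq_or_ne j i with rfl | hj
      · simpa using hx
      · simp [Function.update_of_ne hj]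
    · intro h
      simpa using h i
  rw [hset, Measure.pi_pi]
  rw [Fintype.prod_eq_single i (fun j hj => by simp [Function.update_of_ne hj])]
  simp


lemma measure_eq_prod_of_closed {X Y : Type*}
    [TopologicalSpace X] [MeasurableSpace X] [BorelSpace X]
    [TopologicalSpace Y] [MeasurableSpace Y] [BorelSpace Y]
    (κ : Measure (X × Y)) [IsFiniteMeasure κ] (μ : Measure X) (ν : Measure Y)
    [IsProbabilityMeasure μ] [IsProbabilityMeasure ν]
    (h : ∀ (F₁ : Set X) (F₂ : Set Y), IsClosed F₁ → IsClosed F₂ → κ (F₁ ×ˢ F₂) = μ F₁ * ν F₂) :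
    κ = μ.prod ν := by
  have hgenX : (inferInstance : MeasurableSpace X)
      = MeasurableSpace.generateFrom {s : Set X | IsClosed s} :=
    BorelSpace.measurable_eq.trans borel_eq_generateFrom_isClosed
  have hgenY : (inferInstance : MeasurableSpace Y)
      = MeasurableSpace.generateFrom {s : Set Y | IsClosed s} :=
    BorelSpace.measurable_eq.trans borel_eq_generateFrom_isClosed
  have step1 : ∀ (F₂ : Set Y), IsClosed F₂ → ∀ (A : Set X), MeasurableSet A →
      κ (A ×ˢ F₂) = μ A * ν F₂ := by
    intro F₂ hF₂ A hA
    set P₁ : Measure X := Measure.map Prod.fst (κ.restrict (Prod.snd ⁻¹' F₂)) with hP₁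
    set P₂ : Measure X := ν F₂ • μ with hP₂
    have hPapp : ∀ (B : Set X), MeasurableSet B → P₁ B = κ (B ×ˢ F₂) := by
      intro B hB
      rw [hP₁, Measure.map_apply measurable_fst hB, Measure.restrict_apply (measurable_fst hB),
        Set.prod_eq]
    have hfin : IsFiniteMeasure P₁ := by
      constructor
      rw [hP₁, Measure.map_apply measurable_fst MeasurableSet.univ]
      exact measure_lt_top _ _
    have hAgree : ∀ (B : Set X), IsClosed B → P₁ B = P₂ B := by
      intro B hB
      rw [hPapp B hB.measurableSet, h B F₂ hB hF₂, hP₂]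
      simp [mul_comm]
    have hP : P₁ = P₂ :=
      ext_of_generate_finite _ hgenX isPiSystem_isClosed hAgree (hAgree univ isClosed_univ)
    calc κ (A ×ˢ F₂) = P₁ A := (hPapp A hA).symm
      _ = P₂ A := by rw [hP]
      _ = μ A * ν F₂ := by rw [hP₂]; simp [mul_comm]
  have step2 : ∀ (A : Set X), MeasurableSet A → ∀ (B : Set Y), MeasurableSet B →
      κ (A ×ˢ B) = μ A * ν B := by
    intro A hA
    set P₁ : Measure Y := Measure.map Prod.snd (κ.restrict (Prod.fst ⁻¹' A)) with hP₁
    set P₂ : Measure Y := μ A • ν with hP₂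
    have hPapp : ∀ (B : Set Y), MeasurableSet B → P₁ B = κ (A ×ˢ B) := by
      intro B hB
      rw [hP₁, Measure.map_apply measurable_snd hB, Measure.restrict_apply (measurable_snd hB),
        Set.prod_eq, Set.inter_comm]
    have hfin : IsFiniteMeasure P₁ := by
      constructor
      rw [hP₁, Measure.map_apply measurable_snd MeasurableSet.univ]
      exact measure_lt_top _ _
    have hAgree : ∀ (B : Set Y), IsClosed B → P₁ B = P₂ B := by
      intro B hB
      rw [hPapp B hB.measurableSet, step1 B hB A hA, hP₂]
      simp
    have hP : P₁ = P₂ :=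
      ext_of_generate_finite _ hgenY isPiSystem_isClosed hAgree (hAgree univ isClosed_univ)
    intro B hB
    calc κ (A ×ˢ B) = P₁ B := (hPapp B hB).symm
      _ = P₂ B := by rw [hP]
      _ = μ A * ν B := by rw [hP₂]; simp
  exact (Measure.prod_eq (fun s t hs ht => step2 s hs t ht)).symm

lemma measure_eq_pi_of_closed {K : ℕ} {Z : Fin K → Type u}
    [∀ i, TopologicalSpace (Z i)] [∀ i, MeasurableSpace (Z i)] [∀ i, BorelSpace (Z i)]
    (κ : Measure (∀ i, Z i)) [IsFiniteMeasure κ] (ρ : ∀ i, Measure (Z i))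
    [∀ i, IsProbabilityMeasure (ρ i)]
    (h : ∀ F : ∀ i, Set (Z i), (∀ i, IsClosed (F i)) → κ (univ.pi F) = ∏ i, ρ i (F i)) :
    κ = Measure.pi ρ := by
  classical
  have hgen : ∀ i : Fin K, (inferInstance : MeasurableSpace (Z i))
      = MeasurableSpace.generateFrom {s : Set (Z i) | IsClosed s} := fun i =>
    BorelSpace.measurable_eq.trans borel_eq_generateFrom_isClosed
  have claim : ∀ (T : Finset (Fin K)) (s : ∀ i, Set (Z i)),
      (∀ i ∈ T, MeasurableSet (s i)) → (∀ i ∉ T, IsClosed (s i)) →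
      κ (univ.pi s) = ∏ i, ρ i (s i) := by
    intro T
    induction T using Finset.induction_on with
    | empty => intro s _ hs; exact h s (fun i => hs i (Finset.notMem_empty i))
    | @insert j T hj ih =>
      intro s hsm hsc
      have hSset : {x : ∀ i, Z i | ∀ i, i ≠ j → x i ∈ s i}
          = ⋂ i, ⋂ (_ : i ≠ j), Function.eval i ⁻¹' s i := by
        ext x; simp
      have hsmeas : ∀ i : Fin K, i ≠ j → MeasurableSet (s i) := by
        intro i hij
        by_cases hiT : i ∈ T
        · exact hsm i (Finset.mem_insert_of_mem hiT)
        · exact (hsc i (by simp [Finset.mem_insert, hij, hiT])).measurableSet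
      have hS : MeasurableSet {x : ∀ i, Z i | ∀ i, i ≠ j → x i ∈ s i} := by
        rw [hSset]
        exact MeasurableSet.iInter fun i => MeasurableSet.iInter fun hij =>
          measurable_pi_apply i (hsmeas i hij)
      set P₁ : Measure (Z j) :=
        Measure.map (Function.eval j) (κ.restrict {x | ∀ i, i ≠ j → x i ∈ s i}) with hP₁
      set c : ℝ≥0∞ := ∏ i ∈ Finset.univ.erase j, ρ i (s i) with hc
      set P₂ : Measure (Z j) := c • ρ j with hP₂
      have hupdate : ∀ (A : Set (Z j)), univ.pi (Function.update s j A)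
          = Function.eval j ⁻¹' A ∩ {x | ∀ i, i ≠ j → x i ∈ s i} := by
        intro A; ext x
        simp only [mem_univ_pi, mem_inter_iff, mem_preimage, mem_setOf_eq]
        constructor
        · intro hx
          refine ⟨by simpa using hx j, fun i hij => by
            simpa [Function.update_of_ne hij] using hx i⟩
        · rintro ⟨h1, h2⟩ i
          rcases eq_or_ne i j with rfl | hij
          · simpa using h1
          · simpa [Function.update_of_ne hij] using h2 i hij
      have hP₁app : ∀ (A : Set (Z j)), MeasurableSet A →
          P₁ A = κ (univ.pi (Function.update s j A)) := by
        intro A hA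
        rw [hP₁, Measure.map_apply (measurable_pi_apply j) hA,
          Measure.restrict_apply (measurable_pi_apply j hA), hupdate]
      have hprodupdate : ∀ (A : Set (Z j)), ∏ i, ρ i (Function.update s j A i) = ρ j A * c := by
        intro A
        rw [hc, ← Finset.mul_prod_erase Finset.univ (fun i => ρ i (Function.update s j A i))
          (Finset.mem_univ j), Function.update_self]
        congr 1
        refine Finset.prod_congr rfl (fun i hi => ?_)
        rw [Function.update_of_ne (Finset.ne_of_mem_erase hi)]
      have hfin : IsFiniteMeasure P₁ := by
        constructor
        rw [hP₁, Measure.map_apply (measurable_pi_apply j) MeasurableSet.univ]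
        exact measure_lt_top _ _
      have hAgree : ∀ (A : Set (Z j)), IsClosed A → P₁ A = P₂ A := by
        intro A hA
        have hm : ∀ i ∈ T, MeasurableSet (Function.update s j A i) := by
          intro i hiT
          rw [Function.update_of_ne (by rintro rfl; exact hj hiT)]
          exact hsm i (Finset.mem_insert_of_mem hiT)
        have hcl : ∀ i ∉ T, IsClosed (Function.update s j A i) := by
          intro i hiT
          rcases eq_or_ne i j with rfl | hij
          · rw [Function.update_self]; exact hA
          · rw [Function.update_of_ne hij]
            exact hsc i (by simp [Finset.mem_insert, hij, hiT])
        rw [hP₁app A hA.measurableSet, ih _ hm hcl, hprodupdate, hP₂]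
        simp [mul_comm]
      have hP : P₁ = P₂ :=
        ext_of_generate_finite _ (hgen j) isPiSystem_isClosed hAgree (hAgree univ isClosed_univ)
      have hAj : MeasurableSet (s j) := hsm j (Finset.mem_insert_self j T)
      have h1 := hP₁app (s j) hAj
      rw [Function.update_eq_self] at h1
      calc κ (univ.pi s) = P₁ (s j) := h1.symm
        _ = P₂ (s j) := by rw [hP]
        _ = ∏ i, ρ i (s i) := by
            rw [hP₂, Measure.smul_apply, smul_eq_mul, hc, mul_comm,
              Finset.mul_prod_erase Finset.univ (fun i => ρ i (s i)) (Finset.mem_univ j)]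
  exact (Measure.pi_eq (fun s hs =>
    claim Finset.univ s (fun i _ => hs i) (fun i hi => absurd (Finset.mem_univ i) hi))).symm


lemma tendsto_finset_prod_ennreal' {ι γ : Type*} {F : Filter γ} (s : Finset ι)
    {f : ι → γ → ℝ≥0∞} {a : ι → ℝ≥0∞} (ha : ∀ i, a i ≠ ∞)
    (h : ∀ i, Tendsto (f i) F (𝓝 (a i))) :
    Tendsto (fun n => ∏ i ∈ s, f i n) F (𝓝 (∏ i ∈ s, a i)) := by
  classical
  induction s using Finset.induction_on with
  | empty => simpa using tendsto_const_nhds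
  | @insert j t hj ih =>
      simp only [Finset.prod_insert hj]
      exact ENNReal.Tendsto.mul (h j)
        (Or.inr (ENNReal.prod_lt_top (fun i _ => (ha i).lt_top)).ne) ih (Or.inr (ha j))

lemma bcf_prod_apply {α : Type*} [TopologicalSpace α] {ι : Type*} (s : Finset ι)
    (g : ι → (α →ᵇ ℝ≥0)) (x : α) : (∏ i ∈ s, g i) x = ∏ i ∈ s, g i x := by
  classical
  induction s using Finset.induction_on with
  | empty => simp
  | @insert j t hj ih => simp [Finset.prod_insert hj, ih]

lemma tendsto_lintegral_apprSeq_prod {X Y : Type*}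
    [TopologicalSpace X] [TopologicalSpace.PseudoMetrizableSpace X]
    [MeasurableSpace X] [OpensMeasurableSpace X]
    [TopologicalSpace Y] [TopologicalSpace.PseudoMetrizableSpace Y]
    [MeasurableSpace Y] [OpensMeasurableSpace Y]
    (P : Measure (X × Y)) [IsFiniteMeasure P] {F₁ : Set X} {F₂ : Set Y}
    (h₁ : IsClosed F₁) (h₂ : IsClosed F₂) :
    Tendsto (fun n => ∫⁻ p : X × Y, (h₁.apprSeq n p.1 : ℝ≥0∞) * (h₂.apprSeq n p.2 : ℝ≥0∞) ∂P)
      atTop (𝓝 (P (F₁ ×ˢ F₂))) := by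
  have hmble : MeasurableSet (F₁ ×ˢ F₂) := (h₁.measurableSet.prod h₂.measurableSet)
  have hpt : ∀ p : X × Y, Tendsto (fun n => (h₁.apprSeq n p.1 : ℝ≥0∞) * (h₂.apprSeq n p.2 : ℝ≥0∞))
      atTop (𝓝 ((F₁ ×ˢ F₂).indicator 1 p)) := by
    intro p
    have t1 : Tendsto (fun n => (h₁.apprSeq n p.1 : ℝ≥0∞)) atTop
        (𝓝 ((F₁.indicator (fun _ => (1 : ℝ≥0)) p.1 : ℝ≥0) : ℝ≥0∞)) := by
      apply ENNReal.tendsto_coe.2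
      have := HasOuterApproxClosed.tendsto_apprSeq h₁
      rw [tendsto_pi_nhds] at this
      exact this p.1
    have t2 : Tendsto (fun n => (h₂.apprSeq n p.2 : ℝ≥0∞)) atTop
        (𝓝 ((F₂.indicator (fun _ => (1 : ℝ≥0)) p.2 : ℝ≥0) : ℝ≥0∞)) := by
      apply ENNReal.tendsto_coe.2
      have := HasOuterApproxClosed.tendsto_apprSeq h₂
      rw [tendsto_pi_nhds] at this
      exact this p.2
    have := ENNReal.Tendsto.mul t1 (Or.inr ENNReal.coe_ne_top) t2 (Or.inr ENNReal.coe_ne_top)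
    have hEq : ((F₁.indicator (fun _ => (1 : ℝ≥0)) p.1 : ℝ≥0) : ℝ≥0∞)
        * ((F₂.indicator (fun _ => (1 : ℝ≥0)) p.2 : ℝ≥0) : ℝ≥0∞)
        = (F₁ ×ˢ F₂).indicator 1 p := by
      by_cases hx : p.1 ∈ F₁ <;> by_cases hy : p.2 ∈ F₂ <;>
        simp [Set.indicator, Set.mem_prod, hx, hy]
    rwa [hEq] at this
  have key := tendsto_lintegral_of_dominated_convergence (μ := P)
    (F := fun n (p : X × Y) => (h₁.apprSeq n p.1 : ℝ≥0∞) * (h₂.apprSeq n p.2 : ℝ≥0∞))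
    (f := (F₁ ×ˢ F₂).indicator 1) (fun _ => 1)
    (fun n => (((h₁.apprSeq n).measurable_coe_ennreal_comp).comp measurable_fst).mul
      (((h₂.apprSeq n).measurable_coe_ennreal_comp).comp measurable_snd))
    (fun n => Eventually.of_forall fun p => by
      calc (h₁.apprSeq n p.1 : ℝ≥0∞) * (h₂.apprSeq n p.2 : ℝ≥0∞)
          ≤ 1 * 1 := by
            gcongr
            · exact_mod_cast HasOuterApproxClosed.apprSeq_apply_le_one h₁ n p.1
            · exact_mod_cast HasOuterApproxClosed.apprSeq_apply_le_one h₂ n p.2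
        _ = 1 := by norm_num)
    (by simpa using measure_ne_top P univ)
    (Eventually.of_forall hpt)
  rwa [lintegral_indicator_one hmble] at key

lemma tendsto_lintegral_apprSeq_pi {K : ℕ} {Z : Fin K → Type u}
    [∀ i, TopologicalSpace (Z i)] [∀ i, TopologicalSpace.PseudoMetrizableSpace (Z i)]
    [∀ i, MeasurableSpace (Z i)] [∀ i, OpensMeasurableSpace (Z i)]
    (P : Measure (∀ i, Z i)) [IsFiniteMeasure P]
    {F : ∀ i, Set (Z i)} (hF : ∀ i, IsClosed (F i)) :
    Tendsto (fun n => ∫⁻ x, ∏ i, ((hF i).apprSeq n (x i) : ℝ≥0∞) ∂P) atTop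
      (𝓝 (P (univ.pi F))) := by
  have hmble : MeasurableSet (univ.pi F) :=
    MeasurableSet.univ_pi (fun i => (hF i).measurableSet)
  have hpt : ∀ x : ∀ i, Z i, Tendsto (fun n => ∏ i, ((hF i).apprSeq n (x i) : ℝ≥0∞)) atTop
      (𝓝 ((univ.pi F).indicator 1 x)) := by
    intro x
    have hcoord : ∀ i : Fin K, Tendsto (fun n => ((hF i).apprSeq n (x i) : ℝ≥0∞)) atTop
        (𝓝 (((F i).indicator (fun _ => (1 : ℝ≥0)) (x i) : ℝ≥0) : ℝ≥0∞)) := by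
      intro i
      apply ENNReal.tendsto_coe.2
      have := HasOuterApproxClosed.tendsto_apprSeq (hF i)
      rw [tendsto_pi_nhds] at this
      exact this (x i)
    have := tendsto_finset_prod_ennreal' Finset.univ (fun _ => ENNReal.coe_ne_top) hcoord
    have hEq : (∏ i, (((F i).indicator (fun _ => (1 : ℝ≥0)) (x i) : ℝ≥0) : ℝ≥0∞))
        = (univ.pi F).indicator 1 x := by
      by_cases hx : x ∈ univ.pi F
      · rw [indicator_of_mem hx]
        rw [Finset.prod_eq_one (fun i _ => by
          rw [indicator_of_mem (hx i (mem_univ i))]; norm_num)]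
        simp
      · rw [indicator_of_notMem hx]
        rw [mem_univ_pi] at hx
        push_neg at hx
        obtain ⟨i, hi⟩ := hx
        exact Finset.prod_eq_zero (Finset.mem_univ i) (by rw [indicator_of_notMem hi]; simp)
    rwa [hEq] at this
  have key := tendsto_lintegral_of_dominated_convergence (μ := P)
    (F := fun n x => ∏ i, ((hF i).apprSeq n (x i) : ℝ≥0∞))
    (f := (univ.pi F).indicator 1) (fun _ => 1)
    (fun n => Finset.measurable_prod _ fun i _ =>
      ((hF i).apprSeq n).measurable_coe_ennreal_comp.comp (measurable_pi_apply i))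
    (fun n => Eventually.of_forall fun x => Finset.prod_le_one (fun i _ => zero_le)
      (fun i _ => by exact_mod_cast HasOuterApproxClosed.apprSeq_apply_le_one (hF i) n (x i)))
    (by simpa using measure_ne_top P univ)
    (Eventually.of_forall hpt)
  rwa [lintegral_indicator_one hmble] at key

end MeanFieldAux
open MeasureTheory Set Filter Topology BoundedContinuousFunction MeanFieldAux
open scoped ENNReal NNReal

open MeanFieldAux

/-- **Closedness of the mean-field family.** For Polish spaces `X`, `Y` (with their Borel
σ-algebras), the family of product probability measures `μ ⊗ ν` is closed in the space of
probability measures on `X × Y` with the topology of weak convergence; more generally, for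
Polish spaces `X₁, …, X_K`, the family of product probability measures `ρ₁ ⊗ ⋯ ⊗ ρ_K` is
closed in the weak topology on probability measures on `X₁ × ⋯ × X_K`. -/
theorem mean_field_family_isClosed
    {X Y : Type*}
    [TopologicalSpace X] [PolishSpace X] [MeasurableSpace X] [BorelSpace X]
    [TopologicalSpace Y] [PolishSpace Y] [MeasurableSpace Y] [BorelSpace Y]
    {K : ℕ} {Z : Fin K → Type*}
    [∀ i, TopologicalSpace (Z i)] [∀ i, PolishSpace (Z i)]
    [∀ i, MeasurableSpace (Z i)] [∀ i, BorelSpace (Z i)] :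
    IsClosed {κ : ProbabilityMeasure (X × Y) |
      ∃ (μ : ProbabilityMeasure X) (ν : ProbabilityMeasure Y),
        (κ : Measure (X × Y)) = (μ : Measure X).prod (ν : Measure Y)} ∧
    IsClosed {κ : ProbabilityMeasure (∀ i, Z i) |
      ∃ ρ : ∀ i, ProbabilityMeasure (Z i),
        (κ : Measure (∀ i, Z i)) = Measure.pi (fun i => (ρ i : Measure (Z i)))} := by
  constructor
  · -- binary product case
    apply IsSeqClosed.isClosed
    intro κs κ hmem hκ
    choose μs νs hprod using hmem
    set μ : ProbabilityMeasure X := κ.map continuous_fst.measurable.aemeasurable with hμ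
    set ν : ProbabilityMeasure Y := κ.map continuous_snd.measurable.aemeasurable with hν
    refine ⟨μ, ν, ?_⟩
    -- convergence of first marginals
    have hμconv : ∀ f : X →ᵇ ℝ≥0, Tendsto (fun n => ∫⁻ x, f x ∂(μs n : Measure X)) atTop
        (𝓝 (∫⁻ x, f x ∂(μ : Measure X))) := by
      intro f
      have h1 := ProbabilityMeasure.tendsto_map_of_tendsto_of_continuous κs κ hκ continuous_fst
      rw [ProbabilityMeasure.tendsto_iff_forall_lintegral_tendsto] at h1
      have h2 := h1 f
      have hms : ∀ n, (((κs n).map continuous_fst.measurable.aemeasurable :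
          ProbabilityMeasure X) : Measure X) = (μs n : Measure X) := by
        intro n
        rw [ProbabilityMeasure.toMeasure_map, hprod n]
        simp [Measure.map_fst_prod]
      simpa [hms, hμ] using h2
    have hνconv : ∀ g : Y →ᵇ ℝ≥0, Tendsto (fun n => ∫⁻ y, g y ∂(νs n : Measure Y)) atTop
        (𝓝 (∫⁻ y, g y ∂(ν : Measure Y))) := by
      intro g
      have h1 := ProbabilityMeasure.tendsto_map_of_tendsto_of_continuous κs κ hκ continuous_snd
      rw [ProbabilityMeasure.tendsto_iff_forall_lintegral_tendsto] at h1
      have h2 := h1 g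
      have hms : ∀ n, (((κs n).map continuous_snd.measurable.aemeasurable :
          ProbabilityMeasure Y) : Measure Y) = (νs n : Measure Y) := by
        intro n
        rw [ProbabilityMeasure.toMeasure_map, hprod n]
        simp [Measure.map_snd_prod]
      simpa [hms, hν] using h2
    have key : ∀ (f : X →ᵇ ℝ≥0) (g : Y →ᵇ ℝ≥0),
        ∫⁻ p : X × Y, (f p.1 : ℝ≥0∞) * (g p.2 : ℝ≥0∞) ∂(κ : Measure (X × Y)) =
          (∫⁻ x, f x ∂(μ : Measure X)) * ∫⁻ y, g y ∂(ν : Measure Y) := by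
      intro f g
      set h : (X × Y) →ᵇ ℝ≥0 :=
        f.compContinuous ⟨Prod.fst, continuous_fst⟩ * g.compContinuous ⟨Prod.snd, continuous_snd⟩
        with hdef
      have hco : ∀ p : X × Y, (h p : ℝ≥0∞) = (f p.1 : ℝ≥0∞) * (g p.2 : ℝ≥0∞) := by
        intro p
        rw [hdef]
        simp
      have hκlim := ProbabilityMeasure.tendsto_iff_forall_lintegral_tendsto.1 hκ h
      have hn : ∀ n, ∫⁻ p, (h p : ℝ≥0∞) ∂(κs n : Measure (X × Y)) =
          (∫⁻ x, f x ∂(μs n : Measure X)) * ∫⁻ y, g y ∂(νs n : Measure Y) := by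
        intro n
        calc ∫⁻ p, (h p : ℝ≥0∞) ∂(κs n : Measure (X × Y))
            = ∫⁻ p : X × Y, (f p.1 : ℝ≥0∞) * (g p.2 : ℝ≥0∞) ∂(κs n : Measure (X × Y)) := by
              simp_rw [hco]
          _ = (∫⁻ x, f x ∂(μs n : Measure X)) * ∫⁻ y, g y ∂(νs n : Measure Y) := by
              rw [hprod n]
              exact lintegral_prod_mul f.measurable_coe_ennreal_comp.aemeasurable
                g.measurable_coe_ennreal_comp.aemeasurable
      have hlim2 : Tendsto (fun n => ∫⁻ p, (h p : ℝ≥0∞) ∂(κs n : Measure (X × Y))) atTop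
          (𝓝 ((∫⁻ x, f x ∂(μ : Measure X)) * ∫⁻ y, g y ∂(ν : Measure Y))) := by
        simp_rw [hn]
        exact ENNReal.Tendsto.mul (hμconv f)
          (Or.inr (g.lintegral_lt_top_of_nnreal (ν : Measure Y)).ne) (hνconv g)
          (Or.inr (f.lintegral_lt_top_of_nnreal (μ : Measure X)).ne)
      have := tendsto_nhds_unique hκlim hlim2
      calc ∫⁻ p : X × Y, (f p.1 : ℝ≥0∞) * (g p.2 : ℝ≥0∞) ∂(κ : Measure (X × Y))
          = ∫⁻ p, (h p : ℝ≥0∞) ∂(κ : Measure (X × Y)) := by simp_rw [hco]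
        _ = (∫⁻ x, f x ∂(μ : Measure X)) * ∫⁻ y, g y ∂(ν : Measure Y) := this
    have hclosed : ∀ (F₁ : Set X) (F₂ : Set Y), IsClosed F₁ → IsClosed F₂ →
        (κ : Measure (X × Y)) (F₁ ×ˢ F₂) = (μ : Measure X) F₁ * (ν : Measure Y) F₂ := by
      intro F₁ F₂ h₁ h₂
      have t1 := tendsto_lintegral_apprSeq_prod (κ : Measure (X × Y)) h₁ h₂
      have t2 := tendsto_lintegral_apprSeq_prod ((μ : Measure X).prod (ν : Measure Y)) h₁ h₂
      have hn : ∀ n, ∫⁻ p : X × Y, (h₁.apprSeq n p.1 : ℝ≥0∞) * (h₂.apprSeq n p.2 : ℝ≥0∞)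
            ∂(κ : Measure (X × Y))
          = ∫⁻ p : X × Y, (h₁.apprSeq n p.1 : ℝ≥0∞) * (h₂.apprSeq n p.2 : ℝ≥0∞)
            ∂((μ : Measure X).prod (ν : Measure Y)) := by
        intro n
        rw [key (h₁.apprSeq n) (h₂.apprSeq n)]
        exact (lintegral_prod_mul (h₁.apprSeq n).measurable_coe_ennreal_comp.aemeasurable
          (h₂.apprSeq n).measurable_coe_ennreal_comp.aemeasurable).symm
      simp_rw [hn] at t1
      have := tendsto_nhds_unique t1 t2
      rw [this, Measure.prod_prod]
    exact measure_eq_prod_of_closed (κ : Measure (X × Y)) (μ : Measure X) (ν : Measure Y) hclosed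
  · -- finite product case
    apply IsSeqClosed.isClosed
    intro κs κ hmem hκ
    choose ρs hprod using hmem
    set ρ : ∀ i, ProbabilityMeasure (Z i) :=
      fun i => κ.map (continuous_apply i).measurable.aemeasurable with hρ
    refine ⟨ρ, ?_⟩
    have hconv : ∀ (i : Fin K) (f : Z i →ᵇ ℝ≥0),
        Tendsto (fun n => ∫⁻ y, f y ∂(ρs n i : Measure (Z i))) atTop
          (𝓝 (∫⁻ y, f y ∂(ρ i : Measure (Z i)))) := by
      intro i f
      have h1 := ProbabilityMeasure.tendsto_map_of_tendsto_of_continuous κs κ hκ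
        (continuous_apply i)
      rw [ProbabilityMeasure.tendsto_iff_forall_lintegral_tendsto] at h1
      have h2 := h1 f
      have hms : ∀ n, (((κs n).map (continuous_apply i).measurable.aemeasurable :
          ProbabilityMeasure (Z i)) : Measure (Z i)) = (ρs n i : Measure (Z i)) := by
        intro n
        rw [ProbabilityMeasure.toMeasure_map, hprod n]
        exact map_eval_pi _ i
      simpa [hms, hρ] using h2
    have key : ∀ f : ∀ i, Z i →ᵇ ℝ≥0,
        ∫⁻ x, ∏ i, ((f i) (x i) : ℝ≥0∞) ∂(κ : Measure (∀ i, Z i))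
          = ∏ i, ∫⁻ y, (f i) y ∂(ρ i : Measure (Z i)) := by
      intro f
      set h : (∀ i, Z i) →ᵇ ℝ≥0 :=
        ∏ i, (f i).compContinuous ⟨fun x => x i, continuous_apply i⟩ with hdef
      have hco : ∀ x : ∀ i, Z i, (h x : ℝ≥0∞) = ∏ i, ((f i) (x i) : ℝ≥0∞) := by
        intro x
        rw [hdef]
        simp [bcf_prod_apply, ENNReal.coe_finset_prod]
      have hκlim := ProbabilityMeasure.tendsto_iff_forall_lintegral_tendsto.1 hκ h
      have hn : ∀ n, ∫⁻ x, (h x : ℝ≥0∞) ∂(κs n : Measure (∀ i, Z i))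
          = ∏ i, ∫⁻ y, (f i) y ∂(ρs n i : Measure (Z i)) := by
        intro n
        calc ∫⁻ x, (h x : ℝ≥0∞) ∂(κs n : Measure (∀ i, Z i))
            = ∫⁻ x, ∏ i, ((f i) (x i) : ℝ≥0∞) ∂(κs n : Measure (∀ i, Z i)) := by
              simp_rw [hco]
          _ = ∏ i, ∫⁻ y, (f i) y ∂(ρs n i : Measure (Z i)) := by
              rw [hprod n]
              exact lintegral_pi_prod _ (fun i => (f i).measurable_coe_ennreal_comp)
      have hlim2 : Tendsto (fun n => ∫⁻ x, (h x : ℝ≥0∞) ∂(κs n : Measure (∀ i, Z i))) atTop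
          (𝓝 (∏ i, ∫⁻ y, (f i) y ∂(ρ i : Measure (Z i)))) := by
        simp_rw [hn]
        exact tendsto_finset_prod_ennreal Finset.univ
          (fun i => ((f i).lintegral_lt_top_of_nnreal _).ne) (fun i => hconv i (f i))
      have := tendsto_nhds_unique hκlim hlim2
      calc ∫⁻ x, ∏ i, ((f i) (x i) : ℝ≥0∞) ∂(κ : Measure (∀ i, Z i))
          = ∫⁻ x, (h x : ℝ≥0∞) ∂(κ : Measure (∀ i, Z i)) := by simp_rw [hco]
        _ = ∏ i, ∫⁻ y, (f i) y ∂(ρ i : Measure (Z i)) := this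
    have hclosed : ∀ F : ∀ i, Set (Z i), (∀ i, IsClosed (F i)) →
        (κ : Measure (∀ i, Z i)) (univ.pi F) = ∏ i, (ρ i : Measure (Z i)) (F i) := by
      intro F hF
      have t1 := tendsto_lintegral_apprSeq_pi (κ : Measure (∀ i, Z i)) hF
      have t2 := tendsto_lintegral_apprSeq_pi (Measure.pi fun i => (ρ i : Measure (Z i))) hF
      have hn : ∀ n, ∫⁻ x, ∏ i, ((hF i).apprSeq n (x i) : ℝ≥0∞) ∂(κ : Measure (∀ i, Z i))
          = ∫⁻ x, ∏ i, ((hF i).apprSeq n (x i) : ℝ≥0∞)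
              ∂(Measure.pi fun i => (ρ i : Measure (Z i))) := by
        intro n
        rw [key (fun i => (hF i).apprSeq n)]
        exact (lintegral_pi_prod _ (fun i => ((hF i).apprSeq n).measurable_coe_ennreal_comp)).symm
      simp_rw [hn] at t1
      have := tendsto_nhds_unique t1 t2
      rw [this, Measure.pi_pi]
    exact measure_eq_pi_of_closed (κ : Measure (∀ i, Z i)) (fun i => (ρ i : Measure (Z i))) hclosed
end

section
/- (Gradient-descent rate for the variational objective.) Let f : ℝ^d → ℝ be convex and differentiable with L-Lipschitz gradient (L > 0), and suppose f attains its minimum at a point x*. Let (x_k) be the gradient-descent iterates x_{k+1} = x_k − (1/L) ∇f(x_k) started from x₀. Then for every k ≥ 2, f(x_k) − f(x*) ≤ (2L/(k−1)) ‖x₀ − x*‖². -/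
open RealInnerProductSpace


open MeasureTheory

open RealInnerProductSpace in
lemma gd_hasDerivAt_line {E : Type*} [NormedAddCommGroup E] [InnerProductSpace ℝ E]
    [CompleteSpace E] (f : E → ℝ) (f' : E → E) (hdiff : ∀ p, HasGradientAt f (f' p) p)
    (a v : E) (t : ℝ) :
    HasDerivAt (fun s : ℝ => f (a + s • v)) ⟪f' (a + t • v), v⟫ t := by
  have hline : HasDerivAt (fun s : ℝ => a + s • v) v t := by
    simpa using ((hasDerivAt_id t).smul_const v).const_add a
  have h := (hdiff (a + t • v)).hasFDerivAt.comp_hasDerivAt t hline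
  simpa [InnerProductSpace.toDual_apply_apply, Function.comp_def] using h

open RealInnerProductSpace in
lemma gd_convex_ineq {E : Type*} [NormedAddCommGroup E] [InnerProductSpace ℝ E]
    [CompleteSpace E] (f : E → ℝ) (f' : E → E) (hconv : ConvexOn ℝ Set.univ f)
    (hdiff : ∀ p, HasGradientAt f (f' p) p) (a b : E) :
    f a + ⟪f' a, b - a⟫ ≤ f b := by
  have hφ : ConvexOn ℝ Set.univ (fun t : ℝ => f (a + t • (b - a))) := by
    have h := hconv.comp_affineMap (AffineMap.lineMap a b)
    have : (f ∘ (AffineMap.lineMap a b)) = fun t : ℝ => f (a + t • (b - a)) := by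
      funext t
      simp [AffineMap.lineMap_apply, add_comm, vsub_eq_sub, vadd_eq_add]
    rw [this] at h
    simpa using h
  have hder := gd_hasDerivAt_line f f' hdiff a (b - a) 0
  have hder0 : HasDerivAt (fun t : ℝ => f (a + t • (b - a))) ⟪f' a, b - a⟫ 0 := by
    simpa using hder
  have hs := hφ.le_slope_of_hasDerivAt (Set.mem_univ (0:ℝ)) (Set.mem_univ (1:ℝ))
    zero_lt_one hder0
  have hsl : slope (fun t : ℝ => f (a + t • (b - a))) 0 1 = f b - f a := by
    simp [slope_def_field]
  rw [hsl] at hs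
  linarith

open RealInnerProductSpace in
lemma gd_descent {E : Type*} [NormedAddCommGroup E] [InnerProductSpace ℝ E]
    [CompleteSpace E] (f : E → ℝ) (f' : E → E) (hdiff : ∀ p, HasGradientAt f (f' p) p)
    (L : ℝ) (hL : 0 < L) (hlip : ∀ x y, ‖f' x - f' y‖ ≤ L * ‖x - y‖) (a b : E) :
    f b ≤ f a + ⟪f' a, b - a⟫ + L / 2 * ‖b - a‖ ^ 2 := by
  set v : E := b - a with hv
  set ψ : ℝ → ℝ := fun t => f (a + t • v) - t * ⟪f' a, v⟫ - L / 2 * ‖v‖ ^ 2 * t ^ 2 with hψ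
  have hψd : ∀ t : ℝ, HasDerivAt ψ (⟪f' (a + t • v), v⟫ - ⟪f' a, v⟫ - L * ‖v‖ ^ 2 * t) t := by
    intro t
    have h1 := gd_hasDerivAt_line f f' hdiff a v t
    have h2 : HasDerivAt (fun t : ℝ => t * ⟪f' a, v⟫) ⟪f' a, v⟫ t := by
      simpa using (hasDerivAt_id t).mul_const (⟪f' a, v⟫ : ℝ)
    have h3 : HasDerivAt (fun t : ℝ => L / 2 * ‖v‖ ^ 2 * t ^ 2) (L * ‖v‖ ^ 2 * t) t := by
      have h := (hasDerivAt_pow 2 t).const_mul (L / 2 * ‖v‖ ^ 2)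
      refine h.congr_deriv ?_
      ring
    exact (h1.sub h2).sub h3
  have hmono : AntitoneOn ψ (Set.Icc (0:ℝ) 1) := by
    apply antitoneOn_of_deriv_nonpos (convex_Icc 0 1)
    · exact fun t _ => ((hψd t).differentiableAt.continuousAt.continuousWithinAt)
    · exact fun t _ => (hψd t).differentiableAt.differentiableWithinAt
    · intro t ht
      rw [interior_Icc] at ht
      rw [(hψd t).deriv]
      have key : ⟪f' (a + t • v) - f' a, v⟫ ≤ L * ‖v‖ ^ 2 * t := by
        calc ⟪f' (a + t • v) - f' a, v⟫ ≤ ‖f' (a + t • v) - f' a‖ * ‖v‖ :=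
              real_inner_le_norm _ _
          _ ≤ (L * ‖(a + t • v) - a‖) * ‖v‖ := by
              have := hlip (a + t • v) a
              have hvn : (0:ℝ) ≤ ‖v‖ := norm_nonneg _
              nlinarith [norm_nonneg (f' (a + t • v) - f' a)]
          _ = L * ‖v‖ ^ 2 * t := by
              rw [add_sub_cancel_left, norm_smul, Real.norm_eq_abs,
                abs_of_pos ht.1]
              ring
      rw [inner_sub_left] at key
      linarith
  have hle := hmono (Set.left_mem_Icc.2 zero_le_one) (Set.right_mem_Icc.2 zero_le_one)
    zero_le_one
  have h0 : ψ 0 = f a := by simp [hψ]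
  have h1 : ψ 1 = f b - ⟪f' a, v⟫ - L / 2 * ‖v‖ ^ 2 := by
    simp [hψ, hv]
  rw [h0, h1] at hle
  linarith


/-- **Gradient-descent rate for the variational objective.** If `f : ℝ^d → ℝ` is convex and
differentiable with `L`-Lipschitz gradient (`L > 0`), attains its minimum at `x⋆`, and
`x_{k+1} = x_k − (1/L) ∇f(x_k)`, then for all `k ≥ 2`,
`f(x_k) − f(x⋆) ≤ (2L/(k−1)) ‖x₀ − x⋆‖²`. -/
theorem gradient_descent_rate {d : ℕ} (f : EuclideanSpace ℝ (Fin d) → ℝ)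
    (f' : EuclideanSpace ℝ (Fin d) → EuclideanSpace ℝ (Fin d))
    (hconv : ConvexOn ℝ Set.univ f)
    (hdiff : ∀ x, HasGradientAt f (f' x) x)
    (L : ℝ) (hL : 0 < L)
    (hlip : ∀ x y, ‖f' x - f' y‖ ≤ L * ‖x - y‖)
    (xstar : EuclideanSpace ℝ (Fin d)) (hmin : ∀ y, f xstar ≤ f y)
    (x : ℕ → EuclideanSpace ℝ (Fin d))
    (hiter : ∀ k : ℕ, x (k + 1) = x k - (1 / L) • f' (x k)) :
    ∀ k : ℕ, 2 ≤ k →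
      f (x k) - f xstar ≤ (2 * L / ((k : ℝ) - 1)) * ‖x 0 - xstar‖ ^ 2 := by
  set δ : ℕ → ℝ := fun k => f (x k) - f xstar with hδ
  set r2 : ℕ → ℝ := fun k => ‖x k - xstar‖ ^ 2 with hr2
  have hr2def : ∀ n, r2 n = ‖x n - xstar‖ ^ 2 := fun n => by rw [hr2]
  have hδdef : ∀ n, δ n = f (x n) - f xstar := fun n => by rw [hδ]
  clear_value δ r2
  -- Key 1 : sufficient decrease
  have key1 : ∀ k, δ (k + 1) ≤ δ k - 1 / (2 * L) * ‖f' (x k)‖ ^ 2 := by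
    intro k
    have hdes := gd_descent f f' hdiff L hL hlip (x k) (x (k + 1))
    have hsub : x (k + 1) - x k = -((1 / L) • f' (x k)) := by
      rw [hiter k]; abel
    rw [hsub] at hdes
    have hinner : ⟪f' (x k), -((1 / L) • f' (x k))⟫ = -(1 / L) * ‖f' (x k)‖ ^ 2 := by
      rw [inner_neg_right, real_inner_smul_right, real_inner_self_eq_norm_sq]
      ring
    have hnorm : ‖-((1 / L) • f' (x k))‖ ^ 2 = (1 / L) ^ 2 * ‖f' (x k)‖ ^ 2 := by
      rw [norm_neg, norm_smul, Real.norm_eq_abs, mul_pow, sq_abs]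
    rw [hinner, hnorm] at hdes
    have hL' : L ≠ 0 := ne_of_gt hL
    have : δ (k + 1) ≤ δ k + (-(1 / L) * ‖f' (x k)‖ ^ 2 + L / 2 * ((1 / L) ^ 2 * ‖f' (x k)‖ ^ 2)) := by
      simp only [hδdef]; linarith
    calc δ (k + 1) ≤ δ k + (-(1 / L) * ‖f' (x k)‖ ^ 2 + L / 2 * ((1 / L) ^ 2 * ‖f' (x k)‖ ^ 2)) := this
      _ = δ k - 1 / (2 * L) * ‖f' (x k)‖ ^ 2 := by field_simp; ring
  -- Key 2 : convexity bound
  have key2 : ∀ k, δ k ≤ ⟪f' (x k), x k - xstar⟫ := by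
    intro k
    have h := gd_convex_ineq f f' hconv hdiff (x k) xstar
    have : xstar - x k = -(x k - xstar) := by abel
    rw [this, inner_neg_right] at h
    simp only [hδdef]; linarith
  -- Key 3 : one-step recursion
  have key3 : ∀ k, r2 (k + 1) + 2 / L * δ (k + 1) ≤ r2 k := by
    intro k
    have hexp : r2 (k + 1) = r2 k - 2 * (1 / L) * ⟪f' (x k), x k - xstar⟫
        + (1 / L) ^ 2 * ‖f' (x k)‖ ^ 2 := by
      have hxx : x (k + 1) - xstar = (x k - xstar) - (1 / L) • f' (x k) := by
        rw [hiter k]; abel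
      rw [hr2def, hr2def, hxx]
      rw [norm_sub_sq_real, real_inner_smul_right, norm_smul, Real.norm_eq_abs,
        real_inner_comm]
      rw [abs_of_pos (by positivity : (0:ℝ) < 1 / L)]
      ring
    have h1 := key1 k
    have h2 := key2 k
    have hg2 : ‖f' (x k)‖ ^ 2 ≤ 2 * L * (δ k - δ (k + 1)) := by
      have hL' : (0:ℝ) < 2 * L := by positivity
      have hstep : 1 / (2 * L) * ‖f' (x k)‖ ^ 2 ≤ δ k - δ (k + 1) := by linarith
      have hmul := mul_le_mul_of_nonneg_left hstep (le_of_lt hL')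
      have heq : (2 * L) * (1 / (2 * L) * ‖f' (x k)‖ ^ 2) = ‖f' (x k)‖ ^ 2 := by
        field_simp
      linarith
    rw [hexp]
    have hL' : L ≠ 0 := ne_of_gt hL
    have h3 : (1 / L) ^ 2 * ‖f' (x k)‖ ^ 2 ≤ (1 / L) ^ 2 * (2 * L * (δ k - δ (k + 1))) := by
      apply mul_le_mul_of_nonneg_left hg2 (by positivity)
    have h4 : (1 / L) ^ 2 * (2 * L * (δ k - δ (k + 1))) = 2 / L * (δ k - δ (k + 1)) := by
      field_simp
    have h5 : 2 * (1 / L) * δ k ≤ 2 * (1 / L) * ⟪f' (x k), x k - xstar⟫ := by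
      apply mul_le_mul_of_nonneg_left h2 (by positivity)
    have h6 : 2 * (1 / L) * δ k = 2 / L * δ k := by ring
    linarith [h3, h5, h4.le, h4.ge]
  -- nonnegativity and monotonicity of δ
  have hδ0 : ∀ k, 0 ≤ δ k := fun k => (hδdef k) ▸ sub_nonneg.2 (hmin (x k))
  have hδanti : ∀ m n, m ≤ n → δ n ≤ δ m := by
    have : ∀ k, δ (k + 1) ≤ δ k := by
      intro k
      have h := key1 k
      have hpos : 0 ≤ 1 / (2 * L) * ‖f' (x k)‖ ^ 2 := by positivity
      linarith
    exact fun m n h => antitone_nat_of_succ_le this h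
  -- telescoping
  have tele : ∀ n : ℕ, r2 n + 2 / L * (∑ j ∈ Finset.range n, δ (j + 1)) ≤ r2 0 := by
    intro n
    induction n with
    | zero => simp
    | succ n ih =>
      have h := key3 n
      rw [Finset.sum_range_succ]
      have hr2n : 0 ≤ r2 n := by rw [hr2def]; positivity
      linarith [mul_le_mul_of_nonneg_left (le_refl (0:ℝ)) (le_of_lt hL)]
  -- n * δ n ≤ (L/2) r2 0
  have keyn : ∀ n : ℕ, (n : ℝ) * δ n ≤ L / 2 * r2 0 := by
    intro n
    have hsum : (n : ℝ) * δ n ≤ ∑ j ∈ Finset.range n, δ (j + 1) := by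
      have h := Finset.card_nsmul_le_sum (Finset.range n) (fun j => δ (j + 1)) (δ n)
        (fun j hj => hδanti (j + 1) n (Finset.mem_range.1 hj))
      simpa [nsmul_eq_mul] using h
    have ht := tele n
    have hr2n : 0 ≤ r2 n := by rw [hr2def]; positivity
    have h2L : (0:ℝ) < 2 / L := by positivity
    have : 2 / L * ((n : ℝ) * δ n) ≤ 2 / L * (∑ j ∈ Finset.range n, δ (j + 1)) :=
      mul_le_mul_of_nonneg_left hsum (le_of_lt h2L)
    have hfin : 2 / L * ((n : ℝ) * δ n) ≤ r2 0 := by linarith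
    have hL' : L ≠ 0 := ne_of_gt hL
    calc (n : ℝ) * δ n = L / 2 * (2 / L * ((n : ℝ) * δ n)) := by field_simp
      _ ≤ L / 2 * r2 0 := mul_le_mul_of_nonneg_left hfin (by positivity)
  -- conclude
  intro k hk
  have hk1 : (1:ℝ) ≤ (k : ℝ) - 1 := by
    have : (2:ℝ) ≤ (k : ℝ) := by exact_mod_cast hk
    linarith
  have hk0 : (0:ℝ) < (k : ℝ) - 1 := by linarith
  have hkk : ((k : ℝ) - 1) * δ k ≤ (k : ℝ) * δ k := by
    nlinarith [hδ0 k]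
  have hr20 : 0 ≤ r2 0 := by rw [hr2def]; positivity
  have hfinal : ((k : ℝ) - 1) * δ k ≤ 2 * L * r2 0 := by
    have h7 : L / 2 * r2 0 ≤ 2 * L * r2 0 := by
      nlinarith [mul_nonneg (le_of_lt hL) hr20]
    linarith [keyn k]
  have : δ k ≤ 2 * L * r2 0 / ((k : ℝ) - 1) := by
    rw [le_div_iff₀ hk0]
    linarith [hfinal]
  calc f (x k) - f xstar = δ k := (hδdef k).symm
    _ ≤ 2 * L * r2 0 / ((k : ℝ) - 1) := this
    _ = 2 * L / ((k : ℝ) - 1) * ‖x 0 - xstar‖ ^ 2 := by rw [hr2def]; ring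
end
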